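/- arXiv:1205.2525 — 7 statements merged into one kernel-verified Lean document; each statement's English description precedes it below -/
import Mathlib

section
/- Let m, n ≥ 1 be integers. Given R ≥ 1 there exist constants c₂ > 0 and C₂ ≥ 1 depending only on R, m, n, such that the following holds for any real p with n < p < ∞. Suppose we are given ε₂ ∈ (0, c₂], a point x ∈ ℝⁿ, a symmetric convex subset σ ⊆ 𝒫, a subset 𝒜 ⊆ ℳ, and a family (P_α)_{α∈𝒜} ⊂ 𝒫 such that P_α ∈ ε₂·σ for all α ∈ 𝒜; |∂^β P_α(x) − δ_{αβ}| ≤ ε₂ for all α ∈ 𝒜 and β ∈ ℳ with β ≥ α; and |∂^β P_α(x)| ≤ R for all α ∈ 𝒜, β ∈ ℳ. Then there exists a (C₂, C₂·ε₂) near-triangular matrix B = (B_{αβ})_{α,β∈𝒜} such that the polynomials P̂_α := Σ_{β∈𝒜} B_{αβ} P_β (α ∈ 𝒜) form an (𝒜, x, C₂·ε₂, 1)-basis for σ, and moreover |∂^β P̂_α(x)| ≤ C₂ for every α ∈ 𝒜 and β ∈ ℳ. -/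
noncomputable section

/-- First-order partial derivative in coordinate direction `i`. -/
def pd {n : ℕ} (i : Fin n) (F : (Fin n → ℝ) → ℝ) : (Fin n → ℝ) → ℝ :=
  fun x => fderiv ℝ F x (Pi.single i 1)

/-- Iterated partial derivative in direction `i`. -/
def pdIter {n : ℕ} (i : Fin n) : ℕ → ((Fin n → ℝ) → ℝ) → ((Fin n → ℝ) → ℝ)
  | 0 => id
  | k + 1 => fun F => pd i (pdIter i k F)

/-- Multi-index partial derivative `∂^α`. -/
def pdM {n : ℕ} (α : Fin n → ℕ) (F : (Fin n → ℝ) → ℝ) : (Fin n → ℝ) → ℝ :=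
  (Finset.univ : Finset (Fin n)).toList.foldr (fun i G => pdIter i (α i) G) F

/-- The order `|α|` of a multi-index. -/
def deg {n : ℕ} (α : Fin n → ℕ) : ℕ := ∑ i, α i

/-- The finite set of multi-indices of order at most `d`. -/
def Midx (n d : ℕ) : Finset (Fin n → ℕ) :=
  (Fintype.piFinset fun _ : Fin n => Finset.range (d + 1)).filter fun α => deg α ≤ d

/-- Partial sum `∑_{i=1}^{k} α_i` of the first `k` entries of a multi-index. -/
def psum {n : ℕ} (α : Fin n → ℕ) (k : ℕ) : ℕ :=
  ∑ i ∈ Finset.univ.filter (fun i : Fin n => (i : ℕ) < k), α i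

/-- The order `α < β` on multi-indices. -/
def mlt {n : ℕ} (α β : Fin n → ℕ) : Prop :=
  ∃ k ≤ n, psum α k ≠ psum β k ∧ (∀ j ≤ n, k < j → psum α j = psum β j) ∧
    psum α k < psum β k

/-- `P` is (the function given by) a real polynomial of degree at most `m - 1`. -/
def IsPolyDeg {n : ℕ} (m : ℕ) (P : (Fin n → ℝ) → ℝ) : Prop :=
  ∃ coef : (Fin n → ℕ) → ℝ, ∀ x, P x = ∑ α ∈ Midx n (m - 1), coef α * ∏ i, x i ^ α i

/-- `(P_α)_{α ∈ A}` is an `(𝒜, x, ε, δ)`-basis for `σ`. -/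
def IsBasis {n : ℕ} (m : ℕ) (p : ℝ) (A : Finset (Fin n → ℕ)) (x : Fin n → ℝ)
    (ε δ : ℝ) (σ : Set ((Fin n → ℝ) → ℝ)) (P : (Fin n → ℕ) → (Fin n → ℝ) → ℝ) : Prop :=
  (∀ α ∈ A, ∃ Q ∈ σ, P α = (ε * δ ^ ((n : ℝ) / p + (deg α : ℝ) - (m : ℝ))) • Q) ∧
  (∀ α ∈ A, ∀ β ∈ A, pdM β (P α) x = if β = α then 1 else 0) ∧
  (∀ α ∈ A, ∀ β ∈ Midx n (m - 1), mlt α β →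
    |pdM β (P α) x| ≤ ε * δ ^ ((deg α : ℝ) - (deg β : ℝ)))

/-!
Let `M = (∂^β P_γ(x))_{γ, β ∈ 𝒜}`. Reading the partial sums of a multi-index as the digits of a
numeral in base `m` turns the order `<` on `ℳ` into the order of `ℕ`, and for that order the
hypotheses say that `M` is `(R, ε₂)` near-triangular. Expanding determinant and cofactors over
permutations, every permutation other than the identity picks up an entry `≤ ε₂`, so
`det M ≥ 1/2` and `M⁻¹` is `(C, C ε₂)` near-triangular. With `B = M⁻¹` we get
`∂^β P̂_α(x) = (M⁻¹ M)_{αβ} = δ_{αβ}` for `β ∈ 𝒜`; for `β > α` each term `B_{αγ} ∂^β P_γ(x)`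
has a factor `O(ε₂)` (either `γ < β`, or `γ ≥ β > α`); and `P̂_α ∈ C ε₂ σ` because `σ` is
absolutely convex and `∑_γ |B_{αγ}| ≤ C`.
-/

namespace MultiIndex

variable {n : ℕ}

lemma psum_succ (α : Fin n → ℕ) {k : ℕ} (hk : k < n) :
    psum α (k + 1) = psum α k + α ⟨k, hk⟩ := by
  have : Finset.univ.filter (fun i : Fin n => (i : ℕ) < k + 1)
      = insert ⟨k, hk⟩ (Finset.univ.filter fun i : Fin n => (i : ℕ) < k) := by
    ext i; simp [Fin.ext_iff]; omega
  rw [psum, this, Finset.sum_insert (by simp), add_comm, psum]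

lemma psum_le_deg (α : Fin n → ℕ) (k : ℕ) : psum α k ≤ deg α :=
  Finset.sum_le_sum_of_subset (Finset.filter_subset _ _)

lemma eq_of_forall_psum_eq {α β : Fin n → ℕ} (h : ∀ j ≤ n, psum α j = psum β j) : α = β := by
  funext i
  have hi := psum_succ α i.isLt
  have hi' := psum_succ β i.isLt
  have := h i i.isLt.le
  have := h (i + 1) i.isLt
  simp only [Fin.eta] at hi hi'
  omega

lemma not_mlt_self (α : Fin n → ℕ) : ¬ mlt α α := fun ⟨_, _, hne, _⟩ => hne rfl

lemma mlt_or_mlt_of_ne {α β : Fin n → ℕ} (h : α ≠ β) : mlt α β ∨ mlt β α := by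
  classical
  set k := Nat.findGreatest (fun j => psum α j ≠ psum β j) n
  obtain ⟨j, hjn, hj⟩ : ∃ j ≤ n, psum α j ≠ psum β j := by
    by_contra! hc
    exact h (eq_of_forall_psum_eq hc)
  have hk : psum α k ≠ psum β k := Nat.findGreatest_spec (P := fun j => psum α j ≠ psum β j) hjn hj
  have hkn : k ≤ n := Nat.findGreatest_le n
  have hagree : ∀ j ≤ n, k < j → psum α j = psum β j := fun j hjn hkj =>
    not_not.1 (Nat.findGreatest_is_greatest hkj hjn)
  rcases lt_or_gt_of_ne hk with hlt | hgt
  · exact .inl ⟨k, hkn, hk, hagree, hlt⟩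
  · exact .inr ⟨k, hkn, hk.symm, fun j hjn hkj => (hagree j hjn hkj).symm, hgt⟩

def key (d : ℕ) (α : Fin n → ℕ) : ℕ :=
  ∑ j ∈ Finset.range (n + 1), psum α j * (d + 1) ^ j

end MultiIndex

lemma Nat.sum_range_mul_pow_lt {b t : ℕ} {a : ℕ → ℕ} (ha : ∀ j < t, a j < b) :
    ∑ j ∈ Finset.range t, a j * b ^ j < b ^ t := by
  induction t with
  | zero => simp
  | succ t ih =>
    rw [Finset.sum_range_succ, pow_succ]
    have hsum := ih fun j hj => ha j (by omega)
    have hlast : a t * b ^ t + b ^ t ≤ b ^ t * b := by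
      simpa only [add_one_mul, mul_comm b] using Nat.mul_le_mul_right (b ^ t) (ha t (by omega))
    omega

lemma Nat.sum_range_mul_pow_lt_of_lt {b t N : ℕ} {a c : ℕ → ℕ} (ha : ∀ j < t, a j < b)
    (ht : a t < c t) (heq : ∀ j < N, t < j → a j = c j) (htN : t < N) :
    ∑ j ∈ Finset.range N, a j * b ^ j < ∑ j ∈ Finset.range N, c j * b ^ j := by
  induction N, htN using Nat.le_induction with
  | base =>
    rw [Finset.sum_range_succ, Finset.sum_range_succ]
    have hsum := Nat.sum_range_mul_pow_lt ha
    have hlast : a t * b ^ t + b ^ t ≤ c t * b ^ t := by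
      simpa only [add_one_mul] using Nat.mul_le_mul_right (b ^ t) ht
    omega
  | succ N hN ih =>
    rw [Finset.sum_range_succ, Finset.sum_range_succ, heq N (by omega) hN]
    exact Nat.add_lt_add_right (ih fun j hj => heq j (by omega)) _

namespace MultiIndex

variable {n d : ℕ}

lemma psum_lt_of_mem_midx {α : Fin n → ℕ} (hα : α ∈ Midx n d) (k : ℕ) : psum α k < d + 1 :=
  Nat.lt_succ_of_le ((psum_le_deg α k).trans (Finset.mem_filter.1 hα).2)

lemma key_lt_key_of_mlt {α β : Fin n → ℕ} (hα : α ∈ Midx n d) (h : mlt α β) :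
    key d α < key d β := by
  obtain ⟨k, hkn, -, hagree, hlt⟩ := h
  exact Nat.sum_range_mul_pow_lt_of_lt (fun j _ => psum_lt_of_mem_midx hα j) hlt
    (fun j hj hkj => hagree j (by omega) hkj) (by omega)

lemma mlt_iff_key_lt_key {α β : Fin n → ℕ} (hα : α ∈ Midx n d) (hβ : β ∈ Midx n d) :
    mlt α β ↔ key d α < key d β := by
  refine ⟨key_lt_key_of_mlt hα, fun h => ?_⟩
  have hne : α ≠ β := by rintro rfl; exact lt_irrefl _ h
  exact (mlt_or_mlt_of_ne hne).resolve_right fun h' => (key_lt_key_of_mlt hβ h').not_gt h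

lemma key_injOn : Set.InjOn (key (n := n) d) (Midx n d) := by
  intro α hα β hβ h
  by_contra hne
  rcases mlt_or_mlt_of_ne hne with h' | h'
  · exact (key_lt_key_of_mlt hα h').ne h
  · exact (key_lt_key_of_mlt hβ h').ne h.symm

end MultiIndex

open scoped ContDiff

section SmoothLinear

variable {E : Type*} [NormedAddCommGroup E] [NormedSpace ℝ E]

/-- `fderiv` is additive only on differentiable functions, so the linearity of `pdM` is only
available together with smoothness, which it has to propagate through the iterated derivatives. -/
structure IsLinearOnSmooth (T : (E → ℝ) → E → ℝ) : Prop where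
  contDiff : ∀ F, ContDiff ℝ ∞ F → ContDiff ℝ ∞ (T F)
  map_add : ∀ F G, ContDiff ℝ ∞ F → ContDiff ℝ ∞ G → T (F + G) = T F + T G
  map_smul : ∀ (c : ℝ) F, T (c • F) = c • T F

namespace IsLinearOnSmooth

lemma id : IsLinearOnSmooth (id : (E → ℝ) → E → ℝ) :=
  ⟨fun _ h => h, fun _ _ _ _ => rfl, fun _ _ => rfl⟩

lemma comp {T S : (E → ℝ) → E → ℝ} (hT : IsLinearOnSmooth T) (hS : IsLinearOnSmooth S) :
    IsLinearOnSmooth (T ∘ S) where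
  contDiff F hF := hT.contDiff _ (hS.contDiff F hF)
  map_add F G hF hG := by
    simp only [Function.comp_apply, hS.map_add F G hF hG,
      hT.map_add _ _ (hS.contDiff F hF) (hS.contDiff G hG)]
  map_smul c F := by simp only [Function.comp_apply, hS.map_smul, hT.map_smul]

lemma map_sum {T : (E → ℝ) → E → ℝ} (hT : IsLinearOnSmooth T) {ι : Type*} (s : Finset ι)
    (c : ι → ℝ) {F : ι → E → ℝ} (hF : ∀ i ∈ s, ContDiff ℝ ∞ (F i)) :
    T (∑ i ∈ s, c i • F i) = ∑ i ∈ s, c i • T (F i) := by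
  classical
  induction s using Finset.induction_on with
  | empty => simpa using hT.map_smul 0 0
  | insert a s ha ih =>
    have hs : ∀ i ∈ s, ContDiff ℝ ∞ (F i) := fun i hi => hF i (Finset.mem_insert_of_mem hi)
    have ha' : ContDiff ℝ ∞ (c a • F a) := contDiff_const.smul (hF a (Finset.mem_insert_self a s))
    have hs' : ContDiff ℝ ∞ (∑ i ∈ s, c i • F i) := by
      rw [Finset.sum_fn]
      exact ContDiff.sum fun i hi => contDiff_const.smul (hs i hi)
    rw [Finset.sum_insert ha, Finset.sum_insert ha, hT.map_add _ _ ha' hs', hT.map_smul, ih hs]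

end IsLinearOnSmooth

end SmoothLinear

section PartialDerivatives

variable {n : ℕ}

lemma isLinearOnSmooth_pd (i : Fin n) : IsLinearOnSmooth (pd i) where
  contDiff F hF := (hF.fderiv_right le_rfl).clm_apply contDiff_const
  map_add F G hF hG := by
    ext y
    simp [pd, fderiv_add (hF.differentiable (by simp) y) (hG.differentiable (by simp) y)]
  map_smul c F := by
    ext y
    simp [pd, fderiv_const_smul_field]

lemma isLinearOnSmooth_pdIter (i : Fin n) (k : ℕ) : IsLinearOnSmooth (pdIter i k) := by
  induction k with
  | zero => exact IsLinearOnSmooth.id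
  | succ k ih => exact (isLinearOnSmooth_pd i).comp ih

lemma isLinearOnSmooth_pdM (α : Fin n → ℕ) : IsLinearOnSmooth (pdM α) := by
  unfold pdM
  induction (Finset.univ : Finset (Fin n)).toList with
  | nil => exact IsLinearOnSmooth.id
  | cons i l ih => exact (isLinearOnSmooth_pdIter i (α i)).comp ih

lemma pdM_sum_mul_apply {ι : Type*} (β : Fin n → ℕ) (s : Finset ι) (c : ι → ℝ)
    {F : ι → (Fin n → ℝ) → ℝ} (hF : ∀ i ∈ s, ContDiff ℝ ∞ (F i)) (x : Fin n → ℝ) :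
    pdM β (fun y => ∑ i ∈ s, c i * F i y) x = ∑ i ∈ s, c i * pdM β (F i) x := by
  have hsum : (fun y => ∑ i ∈ s, c i * F i y) = ∑ i ∈ s, c i • F i := by
    ext y
    simp [Finset.sum_apply]
  rw [hsum, (isLinearOnSmooth_pdM β).map_sum s c hF]
  simp [Finset.sum_apply]

lemma IsPolyDeg.contDiff {m : ℕ} {Q : (Fin n → ℝ) → ℝ} (h : IsPolyDeg m Q) :
    ContDiff ℝ ∞ Q := by
  obtain ⟨coef, hQ⟩ := h
  rw [funext hQ]
  exact ContDiff.sum fun α _ => contDiff_const.mul <|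
    contDiff_prod fun i _ => (contDiff_apply ℝ ℝ i).pow _

end PartialDerivatives

lemma AbsConvex.sum_smul_mem {V : Type*} [AddCommGroup V] [Module ℝ V] {s : Set V}
    (hs : AbsConvex ℝ s) (hne : s.Nonempty) {ι : Type*} {t : Finset ι} {c : ι → ℝ} {q : ι → V}
    (hq : ∀ i ∈ t, q i ∈ s) (hc : ∑ i ∈ t, |c i| ≤ 1) : ∑ i ∈ t, c i • q i ∈ s := by
  obtain ⟨hbal, hconv⟩ := hs
  set w := ∑ i ∈ t, |c i|
  rcases (Finset.sum_nonneg fun i _ => abs_nonneg (c i) : 0 ≤ w).eq_or_lt with hw | hw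
  · have hc0 : ∀ i ∈ t, c i = 0 := fun i hi =>
      abs_eq_zero.1 ((Finset.sum_eq_zero_iff_of_nonneg fun j _ => abs_nonneg (c j)).1 hw.symm i hi)
    rw [Finset.sum_eq_zero fun i hi => by rw [hc0 i hi, zero_smul]]
    exact hbal.zero_mem hne
  · have hsign : ∀ i ∈ t, (SignType.sign (c i) : ℝ) • q i ∈ s := fun i hi =>
      hbal.smul_mem (by rcases SignType.sign (c i) with _ | _ | _ <;> simp) (hq i hi)
    have hmem := hconv.sum_mem (t := t) (w := fun i => |c i| / w)
      (fun i _ => div_nonneg (abs_nonneg _) hw.le) (by rw [← Finset.sum_div, div_self hw.ne'])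
      hsign
    convert hbal.smul_mem (a := w) (by rwa [Real.norm_of_nonneg hw.le]) hmem using 1
    rw [Finset.smul_sum]
    refine Finset.sum_congr rfl fun i _ => ?_
    rw [smul_smul, smul_smul, mul_div_cancel₀ _ hw.ne', abs_mul_sign]

lemma AbsConvex.exists_sum_smul_eq_smul {V : Type*} [AddCommGroup V] [Module ℝ V] {s : Set V}
    (hs : AbsConvex ℝ s) (hne : s.Nonempty) {ι : Type*} {t : Finset ι} {b : ι → ℝ} {v : ι → V}
    {ε C : ℝ} (hC : 0 < C) (hv : ∀ i ∈ t, ∃ q ∈ s, v i = ε • q) (hb : ∑ i ∈ t, |b i| ≤ C) :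
    ∃ q ∈ s, ∑ i ∈ t, b i • v i = (C * ε) • q := by
  classical
  choose! q hq hvq using hv
  refine ⟨∑ i ∈ t, (b i / C) • q i, hs.sum_smul_mem hne hq ?_, ?_⟩
  · simpa [abs_div, abs_of_pos hC, ← Finset.sum_div, div_le_one hC] using hb
  · rw [Finset.smul_sum]
    refine Finset.sum_congr rfl fun i hi => ?_
    rw [hvq i hi, smul_smul, smul_smul]
    congr 1
    field_simp

section Constants

variable {S : ℝ}

/-- Large enough to dominate the Leibniz expansions of the determinant and of the cofactors of an
`n × n` matrix with entries bounded by `S`, and its row sums, for every `n ≤ N`. -/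
def nearTriangularBound (N : ℕ) (S : ℝ) : ℝ := (N + 1).factorial * (S + 1) ^ (N + 1)

lemma factorial_mul_pow_le {n k N : ℕ} (hn : n ≤ N) (hk : k ≤ N + 1) (hS : 0 ≤ S) :
    n.factorial * S ^ k ≤ N.factorial * (S + 1) ^ (N + 1) := by
  gcongr
  calc S ^ k ≤ (S + 1) ^ k := by gcongr; linarith
    _ ≤ (S + 1) ^ (N + 1) := pow_le_pow_right₀ (by linarith) hk

lemma nearTriangularBound_eq (N : ℕ) (S : ℝ) :
    nearTriangularBound N S = (N + 1) * (N.factorial * (S + 1) ^ (N + 1)) := by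
  rw [nearTriangularBound, Nat.factorial_succ]
  push_cast
  ring

lemma one_le_factorial_mul_pow (N : ℕ) (hS : 0 ≤ S) : 1 ≤ N.factorial * (S + 1) ^ (N + 1) := by
  simpa using factorial_mul_pow_le (Nat.zero_le N) (Nat.zero_le _) hS

lemma one_le_nearTriangularBound (N : ℕ) (hS : 0 ≤ S) : 1 ≤ nearTriangularBound N S := by
  rw [nearTriangularBound_eq]
  nlinarith [one_le_factorial_mul_pow N hS, (Nat.cast_nonneg N : (0 : ℝ) ≤ N)]

lemma factorial_mul_pow_le_nearTriangularBound {n k N : ℕ} (hn : n ≤ N) (hk : k ≤ N + 1)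
    (hS : 0 ≤ S) : n.factorial * S ^ k ≤ nearTriangularBound N S := by
  rw [nearTriangularBound_eq]
  nlinarith [factorial_mul_pow_le hn hk hS, one_le_factorial_mul_pow N hS,
    (Nat.cast_nonneg N : (0 : ℝ) ≤ N)]

lemma add_factorial_mul_pow_le_nearTriangularBound {n N : ℕ} (hn : n ≤ N) (hS : 0 ≤ S) :
    n + n.factorial * S ^ (n - 1) ≤ nearTriangularBound N S := by
  have hnN : (n : ℝ) ≤ N := by exact_mod_cast hn
  rw [nearTriangularBound_eq]
  nlinarith [factorial_mul_pow_le hn (by omega : n - 1 ≤ N + 1) hS, one_le_factorial_mul_pow N hS,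
    (Nat.cast_nonneg n : (0 : ℝ) ≤ n)]

lemma mul_add_one_le_nearTriangularBound {n N : ℕ} (hn : n ≤ N) (hS : 0 ≤ S) :
    n * (S + 1) ≤ nearTriangularBound N S := by
  have hnN : (n : ℝ) ≤ N := by exact_mod_cast hn
  have hS1 : S + 1 ≤ N.factorial * (S + 1) ^ (N + 1) := by
    calc S + 1 = 1 * (S + 1) ^ 1 := by ring
      _ ≤ N.factorial * (S + 1) ^ (N + 1) := by
        gcongr
        · exact_mod_cast N.factorial_pos
        · linarith
        · omega
  rw [nearTriangularBound_eq]
  nlinarith [(Nat.cast_nonneg n : (0 : ℝ) ≤ n)]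

end Constants

lemma Finset.abs_sum_le_card_mul {ι : Type*} (s : Finset ι) {g : ι → ℝ} {b : ℝ}
    (h : ∀ i ∈ s, |g i| ≤ b) : |∑ i ∈ s, g i| ≤ s.card * b := by
  calc |∑ i ∈ s, g i| ≤ ∑ i ∈ s, |g i| := Finset.abs_sum_le_sum_abs _ _
    _ ≤ s.card • b := Finset.sum_le_card_nsmul _ _ _ h
    _ = s.card * b := nsmul_eq_mul _ _

lemma Equiv.Perm.exists_apply_lt_of_lt_apply {ι : Type*} [Fintype ι] (f : ι → ℕ)
    (σ : Equiv.Perm ι) {i : ι} (h : f i < f (σ i)) : ∃ r, f (σ r) < f r := by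
  by_contra! hc
  have := (Finset.sum_eq_sum_iff_of_le fun r _ => hc r).1 (Equiv.sum_comp σ f).symm i
    (Finset.mem_univ i)
  omega

lemma Equiv.Perm.exists_apply_lt_of_ne_one {ι : Type*} [Fintype ι] {f : ι → ℕ}
    (hf : Function.Injective f) {σ : Equiv.Perm ι} (hσ : σ ≠ 1) : ∃ r, f (σ r) < f r := by
  obtain ⟨i, hi⟩ : ∃ i, σ i ≠ i := by
    by_contra! h
    exact hσ (Equiv.ext h)
  rcases lt_or_gt_of_ne (hf.ne hi) with h | h
  · exact ⟨i, h⟩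
  · exact σ.exists_apply_lt_of_lt_apply f h

section NearTriangular

variable {ι : Type*} [DecidableEq ι]

open Equiv Matrix

/-- `(S, ε)` near-triangular for the order on `ι` pulled back from `ℕ` along `f`. -/
structure IsNearTriangular (f : ι → ℕ) (S ε : ℝ) (M : Matrix ι ι ℝ) : Prop where
  abs_sub_one_le : ∀ i j, f i ≤ f j → |M i j - (1 : Matrix ι ι ℝ) i j| ≤ ε
  abs_apply_le : ∀ i j, |M i j| ≤ S

namespace IsNearTriangular

variable {f : ι → ℕ} {S ε : ℝ} {M : Matrix ι ι ℝ}

lemma abs_le_of_lt (hM : IsNearTriangular f S ε M) {i j : ι} (h : f i < f j) : |M i j| ≤ ε := by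
  have hij : i ≠ j := by rintro rfl; exact lt_irrefl _ h
  simpa [one_apply_ne hij] using hM.abs_sub_one_le i j h.le

end IsNearTriangular

lemma abs_updateRow_single_le {A : Matrix ι ι ℝ} {S : ℝ} (hA : ∀ a b, |A a b| ≤ S) (hS : 1 ≤ S)
    (i j a b : ι) : |A.updateRow j (Pi.single i 1) a b| ≤ S := by
  rw [updateRow_apply]
  split_ifs
  · rcases eq_or_ne b i with rfl | hb
    · simpa using hS
    · simpa [Pi.single_apply, hb] using hS.trans' zero_le_one
  · exact hA a b

variable [Fintype ι]

lemma abs_prod_perm_le {A : Matrix ι ι ℝ} {S ε : ℝ} (hA : ∀ a b, |A a b| ≤ S) (hε : 0 ≤ ε)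
    (σ : Perm ι) {r₀ : ι} (h₀ : |A (σ r₀) r₀| ≤ ε) :
    |∏ r, A (σ r) r| ≤ ε * S ^ (Fintype.card ι - 1) := by
  have hS : 0 ≤ S := (abs_nonneg _).trans (hA r₀ r₀)
  rw [Finset.abs_prod, ← Finset.mul_prod_erase _ _ (Finset.mem_univ r₀)]
  refine mul_le_mul h₀ ?_ (Finset.prod_nonneg fun _ _ => abs_nonneg _) hε
  calc ∏ r ∈ Finset.univ.erase r₀, |A (σ r) r|
      ≤ ∏ _r ∈ Finset.univ.erase r₀, S := Finset.prod_le_prod (fun _ _ => abs_nonneg _)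
        fun _ _ => hA _ _
    _ = S ^ (Fintype.card ι - 1) := by
        rw [Finset.prod_const, Finset.card_erase_of_mem (Finset.mem_univ _), Finset.card_univ]

lemma abs_sum_perm_le (A : Matrix ι ι ℝ) {b : ℝ} (hb : 0 ≤ b) (s : Finset (Perm ι))
    (h : ∀ σ ∈ s, |∏ r, A (σ r) r| ≤ b) :
    |∑ σ ∈ s, Perm.sign σ • ∏ r, A (σ r) r| ≤ (Fintype.card ι).factorial * b := by
  calc |∑ σ ∈ s, Perm.sign σ • ∏ r, A (σ r) r|
      ≤ ∑ σ ∈ s, |Perm.sign σ • ∏ r, A (σ r) r| := Finset.abs_sum_le_sum_abs _ _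
    _ ≤ ∑ σ ∈ s, b := Finset.sum_le_sum fun σ hσ => by
        rcases Int.units_eq_one_or (Perm.sign σ) with h1 | h1 <;>
          simpa [h1, Units.smul_def] using h σ hσ
    _ = s.card * b := by rw [Finset.sum_const, nsmul_eq_mul]
    _ ≤ (Fintype.card ι).factorial * b := by
        gcongr
        rw [← Fintype.card_perm]
        exact_mod_cast Finset.card_le_univ s

lemma abs_adjugate_le {A : Matrix ι ι ℝ} {S : ℝ} (hA : ∀ a b, |A a b| ≤ S) (hS : 1 ≤ S)
    (i j : ι) : |A.adjugate i j| ≤ (Fintype.card ι).factorial * S ^ Fintype.card ι := by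
  rw [adjugate_apply]
  simpa [nsmul_eq_mul] using
    det_le (abv := AbsoluteValue.abs) (abs_updateRow_single_le hA hS i j)

namespace IsNearTriangular

variable {f : ι → ℕ} {S ε : ℝ} {M : Matrix ι ι ℝ}

lemma one_sub_card_mul_le_det (hf : Function.Injective f) (hM : IsNearTriangular f S ε M)
    (hS : 0 ≤ S) (hε : 0 ≤ ε) (hε1 : ε ≤ 1) :
    1 - ε * (Fintype.card ι + (Fintype.card ι).factorial * S ^ (Fintype.card ι - 1)) ≤ M.det := by
  set N := Fintype.card ι
  have hdiag : 1 - N * ε ≤ ∏ i, M i i := by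
    have hpow : (1 - ε) ^ N ≤ ∏ i, M i i := by
      calc (1 - ε) ^ N = ∏ _i : ι, (1 - ε) := by rw [Finset.prod_const, Finset.card_univ]
        _ ≤ ∏ i, M i i := Finset.prod_le_prod (fun _ _ => by linarith) fun i _ => by
            linarith [(abs_le.1 (by simpa using hM.abs_sub_one_le i i le_rfl)).1]
    have hbernoulli := one_add_mul_le_pow (a := -ε) (by linarith) N
    rw [← sub_eq_add_neg] at hbernoulli
    linarith
  have hoff : |∑ σ ∈ Finset.univ.erase (1 : Perm ι), Perm.sign σ • ∏ r, M (σ r) r|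
      ≤ N.factorial * (ε * S ^ (N - 1)) := by
    refine abs_sum_perm_le M (by positivity) _ fun σ hσ => ?_
    obtain ⟨r, hr⟩ := Perm.exists_apply_lt_of_ne_one hf (Finset.ne_of_mem_erase hσ)
    exact abs_prod_perm_le hM.abs_apply_le hε σ (hM.abs_le_of_lt hr)
  rw [det_apply, ← Finset.sum_erase_add _ _ (Finset.mem_univ 1)]
  simp only [Perm.sign_one, one_smul, Perm.coe_one, id_eq]
  linarith [(abs_le.1 hoff).1]

/-- In the permutation expansion of this cofactor only permutations with `σ i = j` survive, and
such a permutation must also move some index down, which picks up a factor `≤ ε`. -/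
lemma abs_adjugate_le_of_lt (hM : IsNearTriangular f S ε M) (hS : 1 ≤ S) (hε : 0 ≤ ε)
    {i j : ι} (hij : f i < f j) :
    |M.adjugate i j| ≤ (Fintype.card ι).factorial * (ε * S ^ (Fintype.card ι - 1)) := by
  rw [adjugate_apply, det_apply]
  refine abs_sum_perm_le _ (by positivity) _ fun σ _ => ?_
  by_cases hσ : σ i = j
  · obtain ⟨r, hr⟩ := σ.exists_apply_lt_of_lt_apply f (i := i) (by rwa [hσ])
    have hrj : σ r ≠ j := by
      rintro h
      rw [← hσ] at h
      rw [σ.injective h, hσ] at hr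
      omega
    refine abs_prod_perm_le (abs_updateRow_single_le hM.abs_apply_le hS i j) hε σ (r₀ := r) ?_
    rw [updateRow_ne hrj]
    exact hM.abs_le_of_lt hr
  · rw [Finset.prod_eq_zero (Finset.mem_univ (σ.symm j)) (by
      rw [σ.apply_symm_apply, updateRow_self, Pi.single_apply, if_neg]
      rintro h
      exact hσ (by rw [← h, σ.apply_symm_apply]))]
    simp only [abs_zero]
    positivity

lemma one_half_le_det (hf : Function.Injective f) (hM : IsNearTriangular f S ε M) {N : ℕ}
    (hN : Fintype.card ι ≤ N) (hS : 0 ≤ S) (hε : 0 ≤ ε)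
    (hεK : ε * nearTriangularBound N S ≤ 1 / 2) : 1 / 2 ≤ M.det := by
  have hK := one_le_nearTriangularBound N hS
  have hdet := hM.one_sub_card_mul_le_det hf hS hε (by nlinarith)
  have hsize := add_factorial_mul_pow_le_nearTriangularBound hN hS
  nlinarith

/-- `M⁻¹ - 1 = M⁻¹ (1 - M)`, and in each term of the product one of the two factors is `O(ε)`. -/
lemma abs_inv_sub_one_le (hM : IsNearTriangular f S ε M) (hunit : IsUnit M.det) {a : ℝ}
    (ha : ∀ i j, |M⁻¹ i j| ≤ a) (ha_lt : ∀ i j, f i < f j → |M⁻¹ i j| ≤ a * ε) {i k : ι}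
    (hik : f i ≤ f k) :
    |M⁻¹ i k - (1 : Matrix ι ι ℝ) i k| ≤ Fintype.card ι * (a * ε * (S + 1)) := by
  have hexpand : M⁻¹ i k - (1 : Matrix ι ι ℝ) i k
      = ∑ r, M⁻¹ i r * ((1 : Matrix ι ι ℝ) r k - M r k) := by
    calc M⁻¹ i k - (1 : Matrix ι ι ℝ) i k = (M⁻¹ * (1 - M)) i k := by
          rw [Matrix.mul_sub, Matrix.mul_one, nonsing_inv_mul M hunit, Matrix.sub_apply]
      _ = _ := by simp only [mul_apply, Matrix.sub_apply]
  rw [hexpand, ← Finset.card_univ]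
  refine Finset.abs_sum_le_card_mul _ fun r _ => ?_
  rw [abs_mul]
  have hS : 0 ≤ S := (abs_nonneg _).trans (hM.abs_apply_le r k)
  rcases lt_or_ge (f i) (f r) with hir | hri
  · have h1 : |(1 : Matrix ι ι ℝ) r k - M r k| ≤ S + 1 := by
      have : |(1 : Matrix ι ι ℝ) r k| ≤ 1 := by rw [one_apply]; split_ifs <;> simp
      linarith [abs_sub ((1 : Matrix ι ι ℝ) r k) (M r k), hM.abs_apply_le r k]
    exact mul_le_mul (ha_lt i r hir) h1 (abs_nonneg _) ((abs_nonneg _).trans (ha_lt i r hir))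
  · have h1 : |(1 : Matrix ι ι ℝ) r k - M r k| ≤ ε := by
      rw [abs_sub_comm]
      exact hM.abs_sub_one_le r k (hri.trans hik)
    have haε : 0 ≤ a * ε :=
      mul_nonneg ((abs_nonneg _).trans (ha i r)) ((abs_nonneg _).trans h1)
    calc |M⁻¹ i r| * |(1 : Matrix ι ι ℝ) r k - M r k| ≤ a * ε :=
          mul_le_mul (ha i r) h1 (abs_nonneg _) ((abs_nonneg _).trans (ha i r))
      _ ≤ a * ε * (S + 1) := le_mul_of_one_le_right haε (by linarith)

theorem isUnit_det_and_inv (hf : Function.Injective f) (hM : IsNearTriangular f S ε M) {N : ℕ}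
    (hN : Fintype.card ι ≤ N) (hS : 1 ≤ S) (hε : 0 ≤ ε)
    (hεK : ε * nearTriangularBound N S ≤ 1 / 2) :
    IsUnit M.det ∧
      IsNearTriangular f (2 * nearTriangularBound N S ^ 2) (2 * nearTriangularBound N S ^ 2 * ε)
        M⁻¹ := by
  set K := nearTriangularBound N S
  have hK : 1 ≤ K := one_le_nearTriangularBound N (by linarith)
  have hdet := hM.one_half_le_det hf hN (by linarith) hε hεK
  have hunit : IsUnit M.det := (show M.det ≠ 0 by linarith).isUnit
  have hinv_apply : ∀ i j, |M⁻¹ i j| ≤ 2 * |M.adjugate i j| := fun i j => by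
    rw [Matrix.inv_def, Matrix.smul_apply, smul_eq_mul, Ring.inverse_eq_inv', abs_mul,
      abs_inv, abs_of_pos (by linarith)]
    gcongr
    rw [inv_le_comm₀ (by linarith) two_pos]
    linarith
  have hinv_le : ∀ i j, |M⁻¹ i j| ≤ 2 * K := fun i j => by
    have := (abs_adjugate_le hM.abs_apply_le hS i j).trans
      (factorial_mul_pow_le_nearTriangularBound hN (by omega) (by linarith))
    linarith [hinv_apply i j]
  have hinv_le_of_lt : ∀ i j, f i < f j → |M⁻¹ i j| ≤ 2 * K * ε := fun i j hij => by
    have := (hM.abs_adjugate_le_of_lt hS hε hij).trans_eq (mul_left_comm _ ε _) |>.trans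
      (mul_le_mul_of_nonneg_left
        (factorial_mul_pow_le_nearTriangularBound hN (by omega) (by linarith)) hε)
    linarith [hinv_apply i j]
  have hcard : (Fintype.card ι : ℝ) * (S + 1) ≤ K :=
    mul_add_one_le_nearTriangularBound hN (by linarith)
  refine ⟨hunit, fun i k hik => ?_, fun i j => (hinv_le i j).trans (by nlinarith)⟩
  calc |M⁻¹ i k - (1 : Matrix ι ι ℝ) i k|
      ≤ Fintype.card ι * (2 * K * ε * (S + 1)) :=
        hM.abs_inv_sub_one_le hunit hinv_le hinv_le_of_lt hik
    _ = 2 * K * ε * (Fintype.card ι * (S + 1)) := by ring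
    _ ≤ 2 * K * ε * K := by gcongr
    _ = 2 * K ^ 2 * ε := by ring

end IsNearTriangular

end NearTriangular

section StrongBasis

open MultiIndex

variable {n d : ℕ} {A : Finset (Fin n → ℕ)} {P : (Fin n → ℕ) → (Fin n → ℝ) → ℝ}
  {x : Fin n → ℝ} {ε R C : ℝ} {G : Matrix A A ℝ}

def derivMatrix (A : Finset (Fin n → ℕ)) (P : (Fin n → ℕ) → (Fin n → ℝ) → ℝ) (x : Fin n → ℝ) :
    Matrix A A ℝ :=
  fun γ β => pdM β.1 (P γ.1) x

def extendMatrix {α : Type*} [DecidableEq α] {A : Finset α} (M : Matrix A A ℝ) (a b : α) : ℝ :=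
  if h : a ∈ A ∧ b ∈ A then M ⟨a, h.1⟩ ⟨b, h.2⟩ else 0

lemma extendMatrix_of_mem {α : Type*} [DecidableEq α] {A : Finset α} (M : Matrix A A ℝ)
    {a b : α} (ha : a ∈ A) (hb : b ∈ A) : extendMatrix M a b = M ⟨a, ha⟩ ⟨b, hb⟩ :=
  dif_pos ⟨ha, hb⟩

lemma key_injective (hA : A ⊆ Midx n d) : Function.Injective fun γ : A => key d γ.1 :=
  fun _ _ h => Subtype.ext (key_injOn (hA (Subtype.prop _)) (hA (Subtype.prop _)) h)

lemma one_apply_subtype (γ β : A) :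
    (1 : Matrix A A ℝ) γ β = if γ.1 = β.1 then 1 else 0 := by
  rw [Matrix.one_apply]
  exact if_congr Subtype.ext_iff rfl rfl

lemma derivMatrix_isNearTriangular (hA : A ⊆ Midx n d)
    (hnear : ∀ α ∈ A, ∀ β ∈ Midx n d, (β = α ∨ mlt α β) →
      |pdM β (P α) x - (if β = α then 1 else 0)| ≤ ε)
    (hbdd : ∀ α ∈ A, ∀ β ∈ Midx n d, |pdM β (P α) x| ≤ R) :
    IsNearTriangular (fun γ : A => key d γ.1) R ε (derivMatrix A P x) where
  abs_sub_one_le γ β h := by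
    rw [one_apply_subtype]
    simp only [@eq_comm _ γ.1]
    refine hnear γ γ.2 β (hA β.2) ?_
    rcases h.eq_or_lt with h | h
    · exact .inl (congrArg Subtype.val (key_injective hA h)).symm
    · exact .inr ((mlt_iff_key_lt_key (hA γ.2) (hA β.2)).2 h)
  abs_apply_le γ β := hbdd γ γ.2 β (hA β.2)

lemma pdM_sum_extendMatrix (hP : ∀ γ ∈ A, ContDiff ℝ ∞ (P γ)) (α : A) (β : Fin n → ℕ) :
    pdM β (fun y => ∑ γ ∈ A, extendMatrix G α γ * P γ y) x = ∑ γ : A, G α γ * pdM β (P γ) x := by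
  rw [pdM_sum_mul_apply β A _ hP, ← Finset.sum_coe_sort A]
  exact Finset.sum_congr rfl fun γ _ => by rw [extendMatrix_of_mem G α.2 γ.2]

lemma sum_inv_derivMatrix_mul_pdM (hunit : IsUnit (derivMatrix A P x).det) (α β : A) :
    ∑ γ : A, (derivMatrix A P x)⁻¹ α γ * pdM β (P γ) x = if β.1 = α.1 then 1 else 0 := by
  simp only [@eq_comm _ β.1]
  rw [← one_apply_subtype, ← Matrix.nonsing_inv_mul _ hunit, Matrix.mul_apply]
  rfl

lemma abs_sum_mul_pdM_le (hbdd : ∀ α ∈ A, ∀ β ∈ Midx n d, |pdM β (P α) x| ≤ R)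
    (hG : ∀ a b, |G a b| ≤ C) (α : A) {β : Fin n → ℕ} (hβ : β ∈ Midx n d) :
    |∑ γ : A, G α γ * pdM β (P γ) x| ≤ A.card * (C * R) := by
  refine (Finset.abs_sum_le_card_mul _ fun γ _ => ?_).trans_eq
    (by rw [Finset.card_univ, Fintype.card_coe])
  rw [abs_mul]
  exact mul_le_mul (hG α γ) (hbdd γ γ.2 β hβ) (abs_nonneg _) ((abs_nonneg _).trans (hG α γ))

/-- A derivative `∂^β` with `β > α` sees each `P_γ` through a small factor: either `γ < β`, and
`∂^β P_γ(x)` is small, or `γ ≥ β > α`, and the coefficient `G_{αγ}` is. -/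
lemma abs_sum_mul_pdM_le_of_mlt (hA : A ⊆ Midx n d)
    (hnear : ∀ α ∈ A, ∀ β ∈ Midx n d, (β = α ∨ mlt α β) →
      |pdM β (P α) x - (if β = α then 1 else 0)| ≤ ε)
    (hbdd : ∀ α ∈ A, ∀ β ∈ Midx n d, |pdM β (P α) x| ≤ R) (hR : 1 ≤ R)
    (hG : IsNearTriangular (fun γ : A => key d γ.1) C (C * ε) G) (α : A) {β : Fin n → ℕ}
    (hβ : β ∈ Midx n d) (hαβ : mlt α.1 β) :
    |∑ γ : A, G α γ * pdM β (P γ) x| ≤ A.card * (C * ε * R) := by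
  refine (Finset.abs_sum_le_card_mul _ fun γ _ => ?_).trans_eq
    (by rw [Finset.card_univ, Fintype.card_coe])
  rw [abs_mul]
  have hC : 0 ≤ C := (abs_nonneg _).trans (hG.abs_apply_le α γ)
  rcases lt_or_ge (key d γ.1) (key d β) with hγβ | hβγ
  · have hmlt := (mlt_iff_key_lt_key (hA γ.2) hβ).2 hγβ
    have hsmall : |pdM β (P γ) x| ≤ ε := by
      have hne : β ≠ γ.1 := fun h => not_mlt_self β (h ▸ hmlt)
      simpa [hne] using hnear γ γ.2 β hβ (.inr hmlt)
    calc |G α γ| * |pdM β (P γ) x| ≤ C * ε :=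
          mul_le_mul (hG.abs_apply_le α γ) hsmall (abs_nonneg _) hC
      _ ≤ C * ε * R := le_mul_of_one_le_right
          (mul_nonneg hC ((abs_nonneg _).trans hsmall)) hR
  · have hαγ : key d α.1 < key d γ.1 := (key_lt_key_of_mlt (hA α.2) hαβ).trans_le hβγ
    exact mul_le_mul (hG.abs_le_of_lt hαγ) (hbdd γ γ.2 β hβ) (abs_nonneg _)
      ((abs_nonneg _).trans (hG.abs_le_of_lt hαγ))

lemma exists_mem_sum_extendMatrix_eq_smul {σ : Set ((Fin n → ℝ) → ℝ)} (hσ : AbsConvex ℝ σ)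
    (hPσ : ∀ α ∈ A, ∃ Q ∈ σ, P α = ε • Q) (hG : ∀ a b, |G a b| ≤ C) (α : A) {C' : ℝ}
    (hC' : 0 < C') (hCC' : A.card * C ≤ C') :
    ∃ Q ∈ σ, (fun y => ∑ γ ∈ A, extendMatrix G α γ * P γ y) = (C' * ε) • Q := by
  obtain ⟨Q, hQ, -⟩ := hPσ α α.2
  have hsum : ∑ γ ∈ A, |extendMatrix G α γ| ≤ C' := by
    rw [← Finset.sum_coe_sort A]
    refine (Finset.sum_le_card_nsmul _ _ C fun γ _ => ?_).trans ?_
    · rw [extendMatrix_of_mem G α.2 γ.2]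
      exact hG α γ
    rwa [Finset.card_univ, Fintype.card_coe, nsmul_eq_mul]
  obtain ⟨Q', hQ', hQ'eq⟩ := hσ.exists_sum_smul_eq_smul ⟨Q, hQ⟩ hC' hPσ hsum
  refine ⟨Q', hQ', ?_⟩
  rw [← hQ'eq]
  ext y
  simp [Finset.sum_apply]

lemma abs_extendMatrix_sub_ite_le (hA : A ⊆ Midx n d)
    (hG : IsNearTriangular (fun γ : A => key d γ.1) C (C * ε) G) {α β : Fin n → ℕ} (hα : α ∈ A)
    (hβ : β ∈ A) (h : α = β ∨ mlt α β) :
    |extendMatrix G α β - (if α = β then 1 else 0)| ≤ C * ε := by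
  have hkey : key d α ≤ key d β := by
    rcases h with rfl | h
    · exact le_rfl
    · exact (key_lt_key_of_mlt (hA hα) h).le
  simpa [extendMatrix_of_mem G hα hβ, one_apply_subtype] using
    hG.abs_sub_one_le ⟨α, hα⟩ ⟨β, hβ⟩ hkey

end StrongBasis

theorem statement5_general (m n : ℕ) (R : ℝ) (hR : 1 ≤ R) :
    ∃ c₂ C₂ : ℝ, 0 < c₂ ∧ 1 ≤ C₂ ∧
      ∀ p : ℝ, (n : ℝ) < p →
      ∀ (ε₂ : ℝ) (x : Fin n → ℝ) (σ : Set ((Fin n → ℝ) → ℝ))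
        (A : Finset (Fin n → ℕ)) (P : (Fin n → ℕ) → (Fin n → ℝ) → ℝ),
        0 < ε₂ → ε₂ ≤ c₂ →
        Convex ℝ σ → (∀ Q ∈ σ, -Q ∈ σ) →
        (∀ Q ∈ σ, IsPolyDeg m Q) →
        A ⊆ Midx n (m - 1) →
        (∀ α ∈ A, ∃ Q ∈ σ, P α = ε₂ • Q) →
        (∀ α ∈ A, ∀ β ∈ Midx n (m - 1), (β = α ∨ mlt α β) →
          |pdM β (P α) x - (if β = α then 1 else 0)| ≤ ε₂) →
        (∀ α ∈ A, ∀ β ∈ Midx n (m - 1), |pdM β (P α) x| ≤ R) →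
        ∃ B : (Fin n → ℕ) → (Fin n → ℕ) → ℝ,
          -- B is (C₂, C₂ ε₂) near-triangular
          (∀ α ∈ A, ∀ β ∈ A, (α = β ∨ mlt α β) →
            |B α β - (if α = β then 1 else 0)| ≤ C₂ * ε₂) ∧
          (∀ α ∈ A, ∀ β ∈ A, |B α β| ≤ C₂) ∧
          -- the P̂_α = ∑_β B_{αβ} P_β form an (𝒜, x, C₂ ε₂, 1)-basis for σ
          IsBasis m p A x (C₂ * ε₂) 1 σ (fun α y => ∑ β ∈ A, B α β * P β y) ∧
          (∀ α ∈ A, ∀ β ∈ Midx n (m - 1),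
            |pdM β (fun y => ∑ γ ∈ A, B α γ * P γ y) x| ≤ C₂) := by
  set K := nearTriangularBound (Midx n (m - 1)).card R
  set C := 2 * K ^ 2
  have hK : 1 ≤ K := one_le_nearTriangularBound _ (by linarith)
  have hC : 1 ≤ C := by nlinarith
  have hCK : C ≤ C * K := le_mul_of_one_le_right (by positivity) hK
  refine ⟨1 / (2 * K), C * K, by positivity, hC.trans hCK, ?_⟩
  intro p _ ε x σ A P hε hεc hconv hneg hpoly hA hPσ hnear hbdd
  have hcard : A.card * (R + 1) ≤ K :=
    mul_add_one_le_nearTriangularBound (Finset.card_le_card hA) (by linarith)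
  have hcardR : A.card * R ≤ K := by nlinarith [(Nat.cast_nonneg A.card : (0 : ℝ) ≤ A.card)]
  have hεK : ε * K ≤ 1 / 2 :=
    (mul_le_mul_of_nonneg_right hεc (by positivity)).trans_eq (by field_simp)
  have hP : ∀ γ ∈ A, ContDiff ℝ ∞ (P γ) := fun γ hγ => by
    obtain ⟨Q, hQ, hPQ⟩ := hPσ γ hγ
    exact hPQ ▸ contDiff_const.smul (hpoly Q hQ).contDiff
  obtain ⟨hunit, hG⟩ := (derivMatrix_isNearTriangular hA hnear hbdd).isUnit_det_and_inv
    (key_injective hA) (by simpa using Finset.card_le_card hA) hR hε.le hεK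
  have hσ : AbsConvex ℝ σ := ⟨(balanced_iff_neg_mem hconv).2 hneg, hconv⟩
  refine ⟨extendMatrix (derivMatrix A P x)⁻¹, fun α hα β hβ h => ?_, fun α hα β hβ => ?_,
    ⟨fun α hα => ?_, fun α hα β hβ => ?_, fun α hα β hβ h => ?_⟩, fun α hα β hβ => ?_⟩
  · exact (abs_extendMatrix_sub_ite_le hA hG hα hβ h).trans (by gcongr)
  · rw [extendMatrix_of_mem _ hα hβ]
    exact (hG.abs_apply_le ⟨α, hα⟩ ⟨β, hβ⟩).trans hCK
  · simpa using exists_mem_sum_extendMatrix_eq_smul hσ hPσ hG.abs_apply_le ⟨α, hα⟩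
      (by positivity) (by nlinarith)
  · rw [pdM_sum_extendMatrix hP ⟨α, hα⟩, sum_inv_derivMatrix_mul_pdM hunit ⟨α, hα⟩ ⟨β, hβ⟩]
  · rw [Real.one_rpow, mul_one, pdM_sum_extendMatrix hP ⟨α, hα⟩]
    refine (abs_sum_mul_pdM_le_of_mlt hA hnear hbdd hR hG ⟨α, hα⟩ hβ h).trans ?_
    nlinarith [mul_le_mul_of_nonneg_left hcardR (by positivity : 0 ≤ C * ε)]
  · rw [pdM_sum_extendMatrix hP ⟨α, hα⟩]
    refine (abs_sum_mul_pdM_le hbdd hG.abs_apply_le ⟨α, hα⟩ hβ).trans ?_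
    nlinarith [mul_le_mul_of_nonneg_left hcardR (by positivity : 0 ≤ C)]

/-- **Lemma 3.5 (weak bases to strong bases).** -/
theorem statement5 (m n : ℕ) (hm : 1 ≤ m) (hn : 1 ≤ n) (R : ℝ) (hR : 1 ≤ R) :
    ∃ c₂ C₂ : ℝ, 0 < c₂ ∧ 1 ≤ C₂ ∧
      ∀ p : ℝ, (n : ℝ) < p →
      ∀ (ε₂ : ℝ) (x : Fin n → ℝ) (σ : Set ((Fin n → ℝ) → ℝ))
        (A : Finset (Fin n → ℕ)) (P : (Fin n → ℕ) → (Fin n → ℝ) → ℝ),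
        0 < ε₂ → ε₂ ≤ c₂ →
        Convex ℝ σ → (∀ Q ∈ σ, -Q ∈ σ) →
        (∀ Q ∈ σ, IsPolyDeg m Q) →
        A ⊆ Midx n (m - 1) →
        (∀ α ∈ A, ∃ Q ∈ σ, P α = ε₂ • Q) →
        (∀ α ∈ A, ∀ β ∈ Midx n (m - 1), (β = α ∨ mlt α β) →
          |pdM β (P α) x - (if β = α then 1 else 0)| ≤ ε₂) →
        (∀ α ∈ A, ∀ β ∈ Midx n (m - 1), |pdM β (P α) x| ≤ R) →
        ∃ B : (Fin n → ℕ) → (Fin n → ℕ) → ℝ,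
          -- B is (C₂, C₂ ε₂) near-triangular
          (∀ α ∈ A, ∀ β ∈ A, (α = β ∨ mlt α β) →
            |B α β - (if α = β then 1 else 0)| ≤ C₂ * ε₂) ∧
          (∀ α ∈ A, ∀ β ∈ A, |B α β| ≤ C₂) ∧
          -- the P̂_α = ∑_β B_{αβ} P_β form an (𝒜, x, C₂ ε₂, 1)-basis for σ
          IsBasis m p A x (C₂ * ε₂) 1 σ (fun α y => ∑ β ∈ A, B α β * P β y) ∧
          (∀ α ∈ A, ∀ β ∈ Midx n (m - 1),
            |pdM β (fun y => ∑ γ ∈ A, B α γ * P γ y) x| ≤ C₂) :=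
  statement5_general m n R hR
end
end

section
/- Assume the CZ-decomposition setting in dimension n. There exists A₀ ≥ 1 depending only on n such that for every A ≥ A₀ the following holds: the number of cubes Q ∈ CZ that are not interstellar is at most C(A)·N, where C(A) depends only on A and n. -/
noncomputable section

/-- The constant `c_G = 10⁻⁶`. -/
def cG : ℝ := 1 / 1000000

/-- A cube `Q = {a} + (−δ, δ]ⁿ` with center `c = a` and half-sidelength `d = δ`
(so the sidelength of `Q` is `2d`). -/
structure Cube (n : ℕ) where
  c : Fin n → ℝ
  d : ℝ

namespace Cube

/-- The cube as a subset of `ℝⁿ`. -/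
def toSet {n : ℕ} (Q : Cube n) : Set (Fin n → ℝ) :=
  {x | ∀ i, Q.c i - Q.d < x i ∧ x i ≤ Q.c i + Q.d}

/-- The sidelength `δ_Q` of a cube. -/
def side {n : ℕ} (Q : Cube n) : ℝ := 2 * Q.d

/-- The dilate `tQ`: same center, sidelength `t·δ_Q`. -/
def scale {n : ℕ} (t : ℝ) (Q : Cube n) : Cube n := ⟨Q.c, t * Q.d⟩

/-- `Q` is a dyadic cube `∏ᵢ (jᵢ·2^k, (jᵢ+1)·2^k]`. -/
def Dyadic {n : ℕ} (Q : Cube n) : Prop :=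
  ∃ k : ℤ, ∃ j : Fin n → ℤ, Q.d = (2 : ℝ) ^ k / 2 ∧
    ∀ i, Q.c i = ((j i : ℝ) + 1 / 2) * (2 : ℝ) ^ k

end Cube

/-- The CZ-decomposition setting: a partition `CZ` of `ℝⁿ` into dyadic cubes with
good geometry, and a finite set `E` with `#E ≥ 2` and `#(E ∩ 9Q) ≥ 2` for all `Q ∈ CZ`. -/
structure CZSetting (n : ℕ) where
  CZ : Set (Cube n)
  E : Finset (Fin n → ℝ)
  dyadic : ∀ Q ∈ CZ, Q.Dyadic
  partition : ∀ x : Fin n → ℝ, ∃! Q, Q ∈ CZ ∧ x ∈ Q.toSet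
  goodGeom : ∀ Q ∈ CZ, ∀ Q' ∈ CZ,
    ((Q.scale (1 + 10 * cG)).toSet ∩ (Q'.scale (1 + 10 * cG)).toSet).Nonempty →
      Q.side / 64 ≤ Q'.side ∧ Q'.side ≤ 64 * Q.side
  two_le_card : 2 ≤ E.card
  dense : ∀ Q ∈ CZ, 2 ≤ ((E : Set (Fin n → ℝ)) ∩ (Q.scale 9).toSet).ncard

/-- `S` is a cluster of `E` (with parameter `A`): `S ⊆ E`, `#S ≥ 2` and
`dist(S, E∖S) ≥ A³·diam S` (with the convention `dist(S,∅) = +∞`). -/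
def IsCluster {n : ℕ} (A : ℝ) (E S : Finset (Fin n → ℝ)) : Prop :=
  S ⊆ E ∧ 2 ≤ S.card ∧
  ∀ x ∈ S, ∀ y ∈ E \ S, A ^ 3 * Metric.diam (S : Set (Fin n → ℝ)) ≤ dist x y

/-- `Q` is interstellar: `diam(A¹⁰Q ∩ E) ≤ A⁻¹⁰·δ_Q` and `(1+3c_G)Q ∩ E = ∅`. -/
def Interstellar {n : ℕ} (A : ℝ) (E : Finset (Fin n → ℝ)) (Q : Cube n) : Prop :=
  Metric.diam ((Q.scale (A ^ 10)).toSet ∩ (E : Set (Fin n → ℝ))) ≤ (A ^ 10)⁻¹ * Q.side ∧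
  (Q.scale (1 + 3 * cG)).toSet ∩ (E : Set (Fin n → ℝ)) = ∅

/-- The halo `H(S)` of a cluster `S` with representative `xS`:
`{x : A·diam S < |x − xS| < A⁻¹·dist(S, E∖S)}` (with `dist(S,∅) = +∞`). -/
def Halo {n : ℕ} (A : ℝ) (E S : Finset (Fin n → ℝ)) (xS : Fin n → ℝ) :
    Set (Fin n → ℝ) :=
  {x | A * Metric.diam (S : Set (Fin n → ℝ)) < dist x xS ∧
    ∀ y ∈ S, ∀ z ∈ E \ S, A * dist x xS < dist y z}

/-- `Q` is a keystone cube of `CZ`: every `Q' ∈ CZ` meeting `100Q` is at least as big. -/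
def Keystone {n : ℕ} (CZ : Set (Cube n)) (Q : Cube n) : Prop :=
  Q ∈ CZ ∧ ∀ Q' ∈ CZ, (Q'.toSet ∩ (Q.scale 100).toSet).Nonempty → Q.side ≤ Q'.side

/-!
A cube `Q ∈ CZ` fails to be interstellar either because `(1 + 3c_G)Q` meets `E`, or because
`A¹⁰Q` contains two points of `E` at distance between `δ_Q / W` and `W δ_Q`, where `W = A¹⁰`.
In the first case good geometry makes `δ_Q` comparable to the CZ cube containing a point of `E`,
so each point of `E` accounts for at most `13 · 3ⁿ` such cubes.

In the second case, at each scale `2^k` the points of `E` with a partner at distance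
`≈ 2^k` are covered by a maximal `W 2^k`-separated net `T_k`, and every such cube of side `2^k`
lies within `2W 2^k` of a point of `T_k`; so it suffices that `∑ₖ #T_k = O(W² N)`.
This is a charging argument on a minimum spanning tree of `E`, with `τ = 2^k / 8W`: a net point
whose `τ`-chain component leaves the ball of radius `2τ` around it is charged to the short tree
edges in that ball, of total length at least `τ`; any other net point is charged injectively to
an endpoint of a tree edge of length between `τ` and `W 2^k`. An edge of length `ℓ` is charged
at `O(W²)` scales of the second kind, and with the geometric weights `ℓ / τ` at the others.
-/

open Finset Relation MeasureTheory

theorem card_filter_zpow_mem_Ico_le (K : Finset ℤ) {a b : ℝ} {L : ℕ}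
    (hab : b ≤ 2 ^ L * a) : #{k ∈ K | a ≤ (2 : ℝ) ^ k ∧ (2 : ℝ) ^ k < b} ≤ L := by
  set F := {k ∈ K | a ≤ (2 : ℝ) ^ k ∧ (2 : ℝ) ^ k < b}
  rcases F.eq_empty_or_nonempty with hF | hF
  · simp [hF]
  set k₀ := F.min' hF
  have hk₀ : a ≤ (2 : ℝ) ^ k₀ := (mem_filter.1 (F.min'_mem hF)).2.1
  calc #F ≤ #(Ico k₀ (k₀ + L)) := card_le_card fun k hk => by
        refine mem_Ico.2 ⟨F.min'_le k hk, (zpow_lt_zpow_iff_right₀ (one_lt_two : (1 : ℝ) < 2)).1 ?_⟩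
        calc (2 : ℝ) ^ k < b := (mem_filter.1 hk).2.2
          _ ≤ 2 ^ L * 2 ^ k₀ := hab.trans (by gcongr)
          _ = 2 ^ (k₀ + L) := by rw [zpow_add₀ two_ne_zero, zpow_natCast, mul_comm]
    _ = L := by simp

theorem sum_div_zpow_le_two (K : Finset ℤ) (c : ℝ) :
    ∑ k ∈ K with c ≤ (2 : ℝ) ^ k, c / 2 ^ k ≤ 2 := by
  set F := {k ∈ K | c ≤ (2 : ℝ) ^ k}
  rcases F.eq_empty_or_nonempty with hF | hF
  · simp [hF]
  set k₀ := F.min' hF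
  have hk₀ : c ≤ (2 : ℝ) ^ k₀ := (mem_filter.1 (F.min'_mem hF)).2
  have hterm : ∀ k ∈ F, c / 2 ^ k ≤ (1 / 2 : ℝ) ^ (k - k₀).toNat := fun k hk => by
    have hk : (2 : ℝ) ^ k = 2 ^ k₀ * 2 ^ (k - k₀).toNat := by
      rw [← zpow_natCast, Int.toNat_of_nonneg (sub_nonneg.2 (F.min'_le k hk)),
        ← zpow_add₀ two_ne_zero, add_sub_cancel]
    rw [hk, one_div_pow, div_le_iff₀ (by positivity)]
    field_simp
    exact hk₀
  calc ∑ k ∈ F, c / 2 ^ k ≤ ∑ k ∈ F, (1 / 2 : ℝ) ^ (k - k₀).toNat := sum_le_sum hterm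
    _ = ∑ m ∈ F.image fun k => (k - k₀).toNat, (1 / 2 : ℝ) ^ m := by
        rw [sum_image fun k hk l hl hkl => ?_]
        have := F.min'_le k hk
        have := F.min'_le l hl
        omega
    _ ≤ ∑' m : ℕ, (1 / 2 : ℝ) ^ m := summable_geometric_two.sum_le_tsum _ fun _ _ => by positivity
    _ = 2 := tsum_geometric_two

/-- The charge that an edge of length `ℓ` receives from the net points at scale `s`. -/
def scaleCharge (W s ℓ : ℝ) : ℝ :=
  (if ℓ / W ≤ s ∧ s < 8 * W * ℓ then 2 else 0) + if 8 * W * ℓ ≤ s then 8 * W * ℓ / s else 0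

theorem sum_scaleCharge_le {W ℓ : ℝ} (hW : 0 < W) (hℓ : 0 ≤ ℓ) {L : ℕ}
    (hL : 8 * W ^ 2 ≤ 2 ^ L) (K : Finset ℤ) :
    ∑ k ∈ K, scaleCharge W (2 ^ k) ℓ ≤ 2 * L + 2 := by
  simp only [scaleCharge, sum_add_distrib, ← sum_filter, sum_const, nsmul_eq_mul]
  have hwin : #{k ∈ K | ℓ / W ≤ (2 : ℝ) ^ k ∧ (2 : ℝ) ^ k < 8 * W * ℓ} ≤ L :=
    card_filter_zpow_mem_Ico_le K <| calc
      8 * W * ℓ = 8 * W ^ 2 * (ℓ / W) := by field_simp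
      _ ≤ 2 ^ L * (ℓ / W) := by gcongr
  have : (#{k ∈ K | ℓ / W ≤ (2 : ℝ) ^ k ∧ (2 : ℝ) ^ k < 8 * W * ℓ} : ℝ) ≤ L := by
    exact_mod_cast hwin
  linarith [sum_div_zpow_le_two K (8 * W * ℓ)]

section MinimaxSpanning

variable {X : Type*}

def EdgeReachable (M : Finset (X × X)) : X → X → Prop := EqvGen fun a b => (a, b) ∈ M

namespace EdgeReachable

variable {M M' : Finset (X × X)} {x y z : X}

protected theorem refl (x : X) : EdgeReachable M x x := EqvGen.refl x

protected theorem symm (hxy : EdgeReachable M x y) : EdgeReachable M y x := EqvGen.symm _ _ hxy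

protected theorem trans (hxy : EdgeReachable M x y) (hyz : EdgeReachable M y z) :
    EdgeReachable M x z :=
  EqvGen.trans _ _ _ hxy hyz

theorem of_mem {a b : X} (h : (a, b) ∈ M) : EdgeReachable M a b := EqvGen.rel _ _ h

theorem of_forall_edge (h : ∀ e ∈ M, EdgeReachable M' e.1 e.2) (hxy : EdgeReachable M x y) :
    EdgeReachable M' x y :=
  EqvGen.eqvGen_le (r' := EqvGen fun a b => (a, b) ∈ M') (fun a b hab => h (a, b) hab) x y hxy

theorem mono (hM : M ⊆ M') (hxy : EdgeReachable M x y) : EdgeReachable M' x y :=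
  hxy.of_forall_edge fun _ he => of_mem (hM he)

theorem iff_of_forall_edge {p : X → Prop} (h : ∀ e ∈ M, p e.1 ↔ p e.2)
    (hxy : EdgeReachable M x y) : p x ↔ p y := by
  induction hxy with
  | rel a b hab => exact h (a, b) hab
  | refl => rfl
  | symm _ _ _ ih => exact ih.symm
  | trans _ _ _ _ _ ih₁ ih₂ => exact ih₁.trans ih₂

end EdgeReachable

open Classical in
theorem card_image_quot_insert_lt (E : Finset X) {M : Finset (X × X)} {a : X × X}
    (ha₁ : a.1 ∈ E) (ha₂ : a.2 ∈ E) (ha : ¬ EdgeReachable M a.1 a.2) :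
    #(E.image (Quot.mk fun x y => (x, y) ∈ insert a M)) <
      #(E.image (Quot.mk fun x y => (x, y) ∈ M)) := by
  let φ : Quot (fun x y => (x, y) ∈ M) → Quot (fun x y => (x, y) ∈ insert a M) :=
    Quot.map id fun x y h => mem_insert_of_mem h
  have hφ : E.image (Quot.mk fun x y => (x, y) ∈ insert a M) =
      (E.image (Quot.mk fun x y => (x, y) ∈ M)).image φ := by
    rw [image_image]; rfl
  rw [hφ]
  refine lt_of_le_of_ne card_image_le fun h => ha (Quot.eqvGen_exact ?_)
  exact card_image_iff.1 h (mem_image_of_mem _ ha₁) (mem_image_of_mem _ ha₂)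
    (Quot.sound (mem_insert_self a M))

variable [PseudoMetricSpace X]

theorem sub_le_sum_dist_of_edgeReachable {M : Finset (X × X)} {τ R : ℝ} {x z : X}
    (hτ : 0 ≤ τ) (hM : ∀ e ∈ M, dist e.1 e.2 ≤ τ) (hxz : EdgeReachable M x z)
    (hR : R < dist x z) :
    R - τ ≤ ∑ e ∈ M with dist x e.1 ≤ R ∧ dist x e.2 ≤ R, dist e.1 e.2 := by
  classical
  set I : X × X → Set ℝ := fun e : X × X =>
    Set.Ico (min (dist x e.1) (dist x e.2)) (max (dist x e.1) (dist x e.2))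
  have hI : ∀ e : X × X,
      max (dist x e.1) (dist x e.2) - min (dist x e.1) (dist x e.2) ≤ dist e.1 e.2 := by
    intro e
    rw [max_sub_min_eq_abs, dist_comm x, dist_comm x]
    exact (abs_dist_sub_le e.2 e.1 x).trans_eq (dist_comm _ _)
  -- the path from `x` to `z` crosses every sphere around `x` of radius `r < R`
  have hcross : ∀ r, 0 ≤ r → r < R → ∃ e ∈ M, r ∈ I e := by
    intro r hr hrR
    by_contra! h
    have hinv : ∀ e ∈ M, dist x e.1 ≤ r ↔ dist x e.2 ≤ r := fun e he => by
      have := h e he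
      simp only [I, Set.mem_Ico, not_and, not_lt] at this
      exact ⟨fun h' => (le_max_right _ _).trans (this (min_le_of_left_le h')),
        fun h' => (le_max_left _ _).trans (this (min_le_of_right_le h'))⟩
    have := (hxz.iff_of_forall_edge (p := fun v => dist x v ≤ r) hinv).1 (by simpa using hr)
    linarith
  set M' := {e ∈ M | dist x e.1 ≤ R ∧ dist x e.2 ≤ R}
  have hcover : Set.Ico 0 (R - τ) ⊆ ⋃ e ∈ M', I e := by
    rintro r ⟨hr, hrR⟩
    obtain ⟨e, he, hre⟩ := hcross r hr (by linarith)
    have hmax : max (dist x e.1) (dist x e.2) ≤ R := by linarith [hI e, hM e he, hre.1]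
    exact Set.mem_biUnion (mem_filter.2 ⟨he, (le_max_left _ _).trans hmax,
      (le_max_right _ _).trans hmax⟩) hre
  calc R - τ ≤ volume.real (Set.Ico 0 (R - τ)) := by simp [Real.volume_real_Ico]
    _ ≤ volume.real (⋃ e ∈ M', I e) :=
        measureReal_mono hcover ((measure_biUnion_finset_le _ _).trans_lt
          (ENNReal.sum_lt_top.2 fun _ _ => measure_Ico_lt_top)).ne
    _ ≤ ∑ e ∈ M', volume.real (I e) := measureReal_biUnion_finset_le _ _
    _ ≤ ∑ e ∈ M', dist e.1 e.2 := sum_le_sum fun e _ => by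
        rw [Real.volume_real_Ico_of_le min_le_max]
        exact hI e

/-- `EdgeReachable (nearPairs E τ) x y` says that `x` and `y` are joined by a `τ`-chain in `E`. -/
def nearPairs (E : Finset X) (τ : ℝ) : Finset (X × X) := {p ∈ E ×ˢ E | dist p.1 p.2 ≤ τ}

/-- The minimax path property of minimum spanning trees. -/
def IsMinimaxSpanning (E : Finset X) (M : Finset (X × X)) : Prop :=
  M ⊆ E.offDiag ∧ ∀ u ∈ E, ∀ v ∈ E, EdgeReachable {e ∈ M | dist e.1 e.2 ≤ dist u v} u v

theorem exists_isMinimaxSpanning (E : Finset X) : ∃ M, IsMinimaxSpanning E M ∧ #M ≤ #E := by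
  classical
  -- Kruskal's algorithm, processing the candidate edges by increasing length
  suffices h : ∀ P ⊆ E.offDiag, ∃ M ⊆ P,
      #M + #(E.image (Quot.mk fun x y => (x, y) ∈ M)) ≤ #E ∧
      ∀ p ∈ P, EdgeReachable {e ∈ M | dist e.1 e.2 ≤ dist p.1 p.2} p.1 p.2 by
    obtain ⟨M, hMP, hcard, hM⟩ := h E.offDiag subset_rfl
    refine ⟨M, ⟨hMP, fun u hu v hv => ?_⟩, by omega⟩
    by_cases huv : u = v
    · exact huv ▸ .refl u
    · exact hM (u, v) (mem_offDiag.2 ⟨hu, hv, huv⟩)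
  intro P
  induction P using Finset.induction_on_max_value (fun e : X × X => dist e.1 e.2) with
  | empty => exact fun _ => ⟨∅, subset_rfl, by simpa using card_image_le, by simp⟩
  | insert a P _ hmax ih =>
    intro hP
    obtain ⟨M, hMP, hcard, hM⟩ := ih ((subset_insert a P).trans hP)
    obtain ⟨ha₁, ha₂, -⟩ := mem_offDiag.1 (hP (mem_insert_self a P))
    by_cases ha : EdgeReachable M a.1 a.2
    · refine ⟨M, hMP.trans (subset_insert a P), hcard, fun p hp => ?_⟩
      rcases mem_insert.1 hp with rfl | hp
      · rwa [filter_true_of_mem fun e he => hmax e (hMP he)]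
      · exact hM p hp
    · refine ⟨insert a M, insert_subset_insert a hMP, ?_, fun p hp => ?_⟩
      · have := card_image_quot_insert_lt E ha₁ ha₂ ha
        have := card_insert_le a M
        omega
      · rcases mem_insert.1 hp with rfl | hp
        · exact .of_mem (mem_filter.2 ⟨mem_insert_self _ M, le_rfl⟩)
        · exact (hM p hp).mono (filter_subset_filter _ (subset_insert a M))

namespace IsMinimaxSpanning

variable {E : Finset X} {M : Finset (X × X)}

theorem edgeReachable_of_near (hM : IsMinimaxSpanning E M) {τ : ℝ} {x y : X}
    (hxy : EdgeReachable (nearPairs E τ) x y) :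
    EdgeReachable {e ∈ M | dist e.1 e.2 ≤ τ} x y :=
  hxy.of_forall_edge fun p hp => by
    obtain ⟨hpE, hpτ⟩ := mem_filter.1 hp
    obtain ⟨hp₁, hp₂⟩ := mem_product.1 hpE
    exact (hM.2 _ hp₁ _ hp₂).mono (monotone_filter_right M fun _ _ he => he.trans hpτ)

theorem exists_long_edge (hM : IsMinimaxSpanning E M) {τ D : ℝ} {x y : X} (hx : x ∈ E)
    (hy : y ∈ E) (hxy : dist x y ≤ D) (hnear : ¬ EdgeReachable (nearPairs E τ) x y) :
    ∃ e ∈ M, τ < dist e.1 e.2 ∧ dist e.1 e.2 ≤ D ∧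
      (EdgeReachable (nearPairs E τ) x e.1 ∨ EdgeReachable (nearPairs E τ) x e.2) := by
  by_contra! h
  have hreach : EdgeReachable {e ∈ M | dist e.1 e.2 ≤ D} x y :=
    (hM.2 x hx y hy).mono (monotone_filter_right M fun _ _ he => he.trans hxy)
  -- otherwise the `τ`-chain component of `x` would be a union of components of `M_{≤ D}`
  refine hnear ((hreach.iff_of_forall_edge fun e he => ?_).1 (.refl x))
  obtain ⟨heM, heD⟩ := mem_filter.1 he
  by_cases heτ : dist e.1 e.2 ≤ τ
  · obtain ⟨he₁, he₂, -⟩ := mem_offDiag.1 (hM.1 heM)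
    have hnear_e : EdgeReachable (nearPairs E τ) e.1 e.2 :=
      .of_mem (mem_filter.2 ⟨mem_product.2 ⟨he₁, he₂⟩, heτ⟩)
    exact ⟨fun h => h.trans hnear_e, fun h => h.trans hnear_e.symm⟩
  · exact iff_of_false (h e heM (not_le.1 heτ) heD).1 (h e heM (not_le.1 heτ) heD).2

theorem card_mul_le_sum_short_edges (hM : IsMinimaxSpanning E M) {τ : ℝ} (hτ : 0 ≤ τ)
    {T : Finset X} (hT : (T : Set X).Pairwise fun x y => 4 * τ < dist x y)
    (hesc : ∀ x ∈ T, ∃ z, EdgeReachable (nearPairs E τ) x z ∧ 2 * τ < dist x z) :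
    #T * τ ≤ ∑ e ∈ M with dist e.1 e.2 ≤ τ, dist e.1 e.2 := by
  classical
  set S := {e ∈ M | dist e.1 e.2 ≤ τ}
  set ball : X → Finset (X × X) := fun x => {e ∈ S | dist x e.1 ≤ 2 * τ ∧ dist x e.2 ≤ 2 * τ}
  have hball : ∀ x ∈ T, τ ≤ ∑ e ∈ ball x, dist e.1 e.2 := by
    intro x hx
    obtain ⟨z, hxz, hz⟩ := hesc x hx
    have := sub_le_sum_dist_of_edgeReachable hτ (fun e he => (mem_filter.1 he).2)
      (hM.edgeReachable_of_near hxz) hz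
    linarith
  have hdisj : (T : Set X).PairwiseDisjoint ball := by
    intro x hx y hy hxy
    refine disjoint_left.2 fun e hex hey => (hT hx hy hxy).not_ge ?_
    have h₁ := (mem_filter.1 hex).2.1
    have h₂ := (mem_filter.1 hey).2.1
    linarith [dist_triangle_right x y e.1]
  calc #T * τ = ∑ _x ∈ T, τ := by rw [sum_const, nsmul_eq_mul]
    _ ≤ ∑ x ∈ T, ∑ e ∈ ball x, dist e.1 e.2 := sum_le_sum hball
    _ = ∑ e ∈ T.biUnion ball, dist e.1 e.2 := (sum_biUnion hdisj).symm
    _ ≤ ∑ e ∈ S, dist e.1 e.2 :=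
        sum_le_sum_of_subset_of_nonneg (biUnion_subset.2 fun _ _ => filter_subset _ _)
          fun _ _ _ => dist_nonneg

theorem card_le_two_mul_card_long_edges (hM : IsMinimaxSpanning E M) {τ D : ℝ} {A : Finset X}
    (hAE : A ⊆ E) (hA : (A : Set X).Pairwise fun x y => ¬ EdgeReachable (nearPairs E τ) x y)
    (hwit : ∀ x ∈ A, ∃ y ∈ E, dist x y ≤ D ∧ ¬ EdgeReachable (nearPairs E τ) x y) :
    #A ≤ 2 * #{e ∈ M | τ < dist e.1 e.2 ∧ dist e.1 e.2 ≤ D} := by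
  classical
  set L := {e ∈ M | τ < dist e.1 e.2 ∧ dist e.1 e.2 ≤ D}
  have hend : ∀ x ∈ A, ∃ p ∈ L.image Prod.fst ∪ L.image Prod.snd,
      EdgeReachable (nearPairs E τ) x p := by
    intro x hx
    obtain ⟨y, hy, hxy, hnear⟩ := hwit x hx
    obtain ⟨e, he, hτ, hD, h | h⟩ := hM.exists_long_edge (hAE hx) hy hxy hnear
    · exact ⟨e.1, mem_union_left _ (mem_image_of_mem _ (mem_filter.2 ⟨he, hτ, hD⟩)), h⟩
    · exact ⟨e.2, mem_union_right _ (mem_image_of_mem _ (mem_filter.2 ⟨he, hτ, hD⟩)), h⟩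
  choose! p hpL hp using hend
  calc #A ≤ #(L.image Prod.fst ∪ L.image Prod.snd) :=
        card_le_card_of_injOn p (fun x hx => hpL x hx) fun x hx y hy hpxy => by
          by_contra hxy
          exact hA hx hy hxy ((hp x hx).trans (hpxy ▸ (hp y hy).symm))
    _ ≤ #L + #L := (card_union_le _ _).trans (add_le_add card_image_le card_image_le)
    _ = 2 * #L := (two_mul _).symm

theorem card_le_at_scale (hM : IsMinimaxSpanning E M) {W s : ℝ} (hW : 1 ≤ W) (hs : 0 < s)
    {T : Finset X} (hTE : T ⊆ E) (hsep : (T : Set X).Pairwise fun x y => W * s < dist x y)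
    (hwit : ∀ x ∈ T, ∃ y ∈ E, s / W < dist x y ∧ dist x y ≤ W * s) :
    (#T : ℝ) ≤ ∑ e ∈ M, scaleCharge W s (dist e.1 e.2) := by
  classical
  have hW₀ : 0 < W := one_pos.trans_le hW
  set τ := s / (8 * W)
  have hτ : 0 < τ := by positivity
  have h2τ : 2 * τ < s / W := by
    rw [show 2 * τ = s / W / 4 by ring]; linarith [div_pos hs hW₀]
  have hsW : s / W ≤ W * s := (div_le_self hs.le hW).trans (le_mul_of_one_le_left hs.le hW)
  have h4τ : 4 * τ ≤ W * s := by
    rw [show 4 * τ = s / W / 2 by ring]; linarith [div_pos hs hW₀]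
  set escapes : X → Prop := fun x => ∃ z, EdgeReachable (nearPairs E τ) x z ∧ 2 * τ < dist x z
  have hB := hM.card_mul_le_sum_short_edges hτ.le (T := {x ∈ T | escapes x})
    ((hsep.mono (coe_subset.2 (filter_subset _ _))).mono' fun x y h => h4τ.trans_lt h)
    fun x hx => (mem_filter.1 hx).2
  have hA := hM.card_le_two_mul_card_long_edges (A := {x ∈ T | ¬ escapes x}) (D := W * s)
    ((filter_subset _ _).trans hTE)
    (fun x hx y hy hxy hreach => (mem_filter.1 hx).2
      ⟨y, hreach, (h2τ.trans_le hsW).trans (hsep (mem_filter.1 hx).1 (mem_filter.1 hy).1 hxy)⟩)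
    fun x hx => by
      obtain ⟨y, hy, hxy, hxy'⟩ := hwit x (mem_filter.1 hx).1
      exact ⟨y, hy, hxy', fun hreach => (mem_filter.1 hx).2 ⟨y, hreach, h2τ.trans hxy⟩⟩
  have hshort : ∀ e : X × X, dist e.1 e.2 ≤ τ ↔ 8 * W * dist e.1 e.2 ≤ s := fun e => by
    rw [le_div_iff₀ (by positivity), mul_comm]
  have hlong : ∀ e : X × X, τ < dist e.1 e.2 ∧ dist e.1 e.2 ≤ W * s ↔
      dist e.1 e.2 / W ≤ s ∧ s < 8 * W * dist e.1 e.2 := fun e => by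
    rw [div_lt_iff₀ (by positivity), div_le_iff₀ hW₀, and_comm, mul_comm W s,
      mul_comm (dist e.1 e.2)]
  rw [filter_congr fun e _ => hlong e] at hA
  rw [filter_congr fun e _ => hshort e, ← le_div_iff₀ hτ, sum_div] at hB
  simp only [scaleCharge, sum_add_distrib, ← sum_filter, sum_const, nsmul_eq_mul]
  calc (#T : ℝ) = #{x ∈ T | ¬ escapes x} + #{x ∈ T | escapes x} := by
        rw [add_comm]; exact_mod_cast (card_filter_add_card_filter_not _).symm
    _ ≤ _ := by
        refine add_le_add (by rw [mul_comm]; exact_mod_cast hA)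
          (hB.trans_eq (sum_congr rfl fun e _ => ?_))
        simp only [τ]
        field_simp

end IsMinimaxSpanning

theorem sum_card_le_of_separated {E : Finset X} {W : ℝ} (hW : 1 ≤ W) (T : ℤ → Finset X)
    (hTE : ∀ k, T k ⊆ E) (hsep : ∀ k, (T k : Set X).Pairwise fun x y => W * 2 ^ k < dist x y)
    (hwit : ∀ k, ∀ x ∈ T k, ∃ y ∈ E, 2 ^ k / W < dist x y ∧ dist x y ≤ W * 2 ^ k)
    (K : Finset ℤ) : ∑ k ∈ K, (#(T k) : ℝ) ≤ 20 * W ^ 2 * #E := by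
  classical
  obtain ⟨M, hM, hME⟩ := exists_isMinimaxSpanning E
  have hL : 8 * W ^ 2 ≤ 2 ^ ⌈8 * W ^ 2⌉₊ :=
    (Nat.le_ceil _).trans (by exact_mod_cast Nat.lt_two_pow_self.le)
  have hL' : (⌈8 * W ^ 2⌉₊ : ℝ) ≤ 8 * W ^ 2 + 1 := (Nat.ceil_lt_add_one (by positivity)).le
  calc ∑ k ∈ K, (#(T k) : ℝ) ≤ ∑ k ∈ K, ∑ e ∈ M, scaleCharge W (2 ^ k) (dist e.1 e.2) :=
        sum_le_sum fun k _ => hM.card_le_at_scale hW (by positivity) (hTE k) (hsep k) (hwit k)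
    _ = ∑ e ∈ M, ∑ k ∈ K, scaleCharge W (2 ^ k) (dist e.1 e.2) := sum_comm
    _ ≤ ∑ _e ∈ M, (2 * ⌈8 * W ^ 2⌉₊ + 2 : ℝ) :=
        sum_le_sum fun _ _ => sum_scaleCharge_le (by linarith) dist_nonneg hL K
    _ = (#M : ℝ) * (2 * ⌈8 * W ^ 2⌉₊ + 2) := by rw [sum_const, nsmul_eq_mul]
    _ ≤ #E * (20 * W ^ 2) :=
        mul_le_mul (by exact_mod_cast hME) (by nlinarith) (by positivity) (by positivity)
    _ = 20 * W ^ 2 * #E := mul_comm _ _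

theorem exists_separated_net (F : Finset X) {r : ℝ} (hr : 0 ≤ r) :
    ∃ T ⊆ F, (T : Set X).Pairwise (fun x y => r < dist x y) ∧ ∀ x ∈ F, ∃ t ∈ T, dist x t ≤ r := by
  classical
  obtain ⟨T, hT⟩ := exists_maximal
    (s := F.powerset.filter fun T : Finset X => (T : Set X).Pairwise fun x y => r < dist x y)
    ⟨∅, mem_filter.2 ⟨empty_mem_powerset F, by simp⟩⟩
  obtain ⟨hTF, hTsep⟩ := mem_filter.1 hT.prop
  refine ⟨T, mem_powerset.1 hTF, hTsep, fun x hx => ?_⟩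
  by_contra! hfar
  have hxT : x ∉ T := fun hxT => (hfar x hxT).not_ge (by simpa using hr)
  refine hxT (hT.2 (mem_filter.2 ⟨mem_powerset.2 (insert_subset hx (mem_powerset.1 hTF)), ?_⟩)
    (subset_insert x T) (mem_insert_self x T))
  rw [coe_insert, Set.pairwise_insert]
  exact ⟨hTsep, fun y hy _ => ⟨hfar y hy, dist_comm x y ▸ hfar y hy⟩⟩

theorem exists_scale_nets (E : Finset X) {W : ℝ} (hW : 1 ≤ W) :
    ∃ T : ℤ → Finset X,
      (∀ k, ∀ x ∈ E, ∀ y ∈ E, 2 ^ k / W < dist x y → dist x y ≤ W * 2 ^ k →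
        ∃ t ∈ T k, dist x t ≤ W * 2 ^ k) ∧
      ∀ K : Finset ℤ, ∑ k ∈ K, (#(T k) : ℝ) ≤ 20 * W ^ 2 * #E := by
  classical
  have hnet := fun k : ℤ => exists_separated_net
    {x ∈ E | ∃ y ∈ E, 2 ^ k / W < dist x y ∧ dist x y ≤ W * 2 ^ k}
    (r := W * 2 ^ k) (by positivity)
  choose T hTE hTsep hTcover using hnet
  refine ⟨T, fun k x hx y hy h₁ h₂ => hTcover k x (mem_filter.2 ⟨hx, y, hy, h₁, h₂⟩),
    sum_card_le_of_separated hW T (fun k => (hTE k).trans (filter_subset _ _)) hTsep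
      fun k x hx => (mem_filter.1 (hTE k hx)).2⟩

end MinimaxSpanning

namespace Cube

variable {n : ℕ}

theorem dist_center_le {Q : Cube n} (hQ : 0 ≤ Q.d) {x : Fin n → ℝ} (hx : x ∈ Q.toSet) :
    dist x Q.c ≤ Q.d := by
  refine (dist_pi_le_iff hQ).2 fun i => ?_
  rw [Real.dist_eq, abs_le]
  constructor <;> linarith [hx i]

theorem scale_one (Q : Cube n) : Q.scale 1 = Q := by
  cases Q; simp [scale]

theorem toSet_scale_subset {Q : Cube n} (hQ : 0 ≤ Q.d) {t t' : ℝ} (h : t ≤ t') :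
    (Q.scale t).toSet ⊆ (Q.scale t').toSet := fun x hx i => by
  have hxi : Q.c i - t * Q.d < x i ∧ x i ≤ Q.c i + t * Q.d := hx i
  have := mul_le_mul_of_nonneg_right h hQ
  show Q.c i - t' * Q.d < x i ∧ x i ≤ Q.c i + t' * Q.d
  exact ⟨by linarith, by linarith⟩

theorem Dyadic.exists_side_eq {Q : Cube n} (hQ : Q.Dyadic) : ∃ k : ℤ, Q.side = 2 ^ k := by
  obtain ⟨k, -, hd, -⟩ := hQ
  exact ⟨k, by rw [side, hd]; ring⟩

theorem Dyadic.d_pos {Q : Cube n} (hQ : Q.Dyadic) : 0 < Q.d := by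
  obtain ⟨k, -, hd, -⟩ := hQ
  rw [hd]; positivity

theorem Dyadic.center_eq {Q : Cube n} (hQ : Q.Dyadic) (i : Fin n) :
    Q.c i = (⌊Q.c i / Q.side⌋ + 1 / 2) * Q.side := by
  obtain ⟨k, j, hd, hc⟩ := hQ
  have hside : Q.side = 2 ^ k := by rw [side, hd]; ring
  have hfloor : ⌊Q.c i / Q.side⌋ = j i := by
    rw [hc i, hside, mul_div_cancel_right₀ _ (by positivity), Int.floor_intCast_add]
    norm_num
  rw [hfloor, hside, hc i]

theorem Dyadic.exists_side_eq_zpow_mul {Q Q' : Cube n} (hQ : Q.Dyadic) (hQ' : Q'.Dyadic)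
    (h₁ : Q.side / 64 ≤ Q'.side) (h₂ : Q'.side ≤ 64 * Q.side) :
    ∃ j ∈ Icc (-6 : ℤ) 6, Q'.side = 2 ^ j * Q.side := by
  obtain ⟨a, ha⟩ := hQ.exists_side_eq
  obtain ⟨b, hb⟩ := hQ'.exists_side_eq
  have h64 : (64 : ℝ) = 2 ^ (6 : ℤ) := by norm_num
  rw [ha, hb, h64, ← zpow_add₀ two_ne_zero] at h₂
  rw [ha, hb, h64, div_le_iff₀ (by positivity), ← zpow_add₀ two_ne_zero] at h₁
  have := (zpow_le_zpow_iff_right₀ (one_lt_two : (1 : ℝ) < 2)).1 h₁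
  have := (zpow_le_zpow_iff_right₀ (one_lt_two : (1 : ℝ) < 2)).1 h₂
  refine ⟨b - a, mem_Icc.2 ⟨by omega, by omega⟩, ?_⟩
  rw [ha, hb, ← zpow_add₀ two_ne_zero, sub_add_cancel]

end Cube

open Cube

theorem card_le_of_dyadic_near {n : ℕ} (F : Finset (Cube n)) (s : ℝ) (t : Fin n → ℝ) {ρ : ℝ}
    (hF : ∀ Q ∈ F, Q.Dyadic ∧ Q.side = s ∧ dist Q.c t ≤ ρ * s) : #F ≤ (2 * ⌈ρ⌉₊ + 1) ^ n := by
  classical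
  rcases F.eq_empty_or_nonempty with rfl | ⟨Q₀, hQ₀⟩
  · simp
  have hs : 0 < s := by
    obtain ⟨hQ₀d, hQ₀s, -⟩ := hF Q₀ hQ₀
    rw [← hQ₀s, side]; linarith [hQ₀d.d_pos]
  set m := ⌈ρ⌉₊
  -- a dyadic cube of sidelength `s` is determined by the integer parts of `c / s`
  let g : Cube n → Fin n → ℤ := fun Q i => ⌊Q.c i / s⌋
  have hmaps : ∀ Q ∈ F, g Q ∈ Icc (fun i => ⌊t i / s⌋ - m) (fun i => ⌊t i / s⌋ + m) := by
    intro Q hQ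
    obtain ⟨-, -, hdist⟩ := hF Q hQ
    have hi : ∀ i, |Q.c i / s - t i / s| ≤ m := fun i => by
      rw [← sub_div, abs_div, abs_of_pos hs, div_le_iff₀ hs, ← Real.dist_eq]
      exact (dist_le_pi_dist Q.c t i).trans (hdist.trans (by gcongr; exact Nat.le_ceil ρ))
    refine mem_Icc.2 ⟨fun i => ?_, fun i => ?_⟩
    · show ⌊t i / s⌋ - (m : ℤ) ≤ ⌊Q.c i / s⌋
      rw [← Int.floor_sub_natCast]
      exact Int.floor_mono (by linarith [(abs_le.1 (hi i)).1])
    · show ⌊Q.c i / s⌋ ≤ ⌊t i / s⌋ + (m : ℤ)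
      rw [← Int.floor_add_natCast]
      exact Int.floor_mono (by linarith [(abs_le.1 (hi i)).2])
  have hinj : Set.InjOn g F := by
    intro Q hQ Q' hQ' hg
    obtain ⟨hQd, hQs, -⟩ := hF Q hQ
    obtain ⟨hQ'd, hQ's, -⟩ := hF Q' hQ'
    have hc : Q.c = Q'.c := funext fun i => by
      rw [hQd.center_eq i, hQ'd.center_eq i, hQs, hQ's]
      exact congrArg (fun j : ℤ => ((j : ℝ) + 1 / 2) * s) (congrFun hg i)
    have hd : Q.d = Q'.d := by
      have : Q.side = Q'.side := hQs.trans hQ's.symm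
      simp only [side] at this; linarith
    cases Q; cases Q'
    simp_all
  calc #F ≤ #(Icc (fun i => ⌊t i / s⌋ - m) (fun i => ⌊t i / s⌋ + m)) :=
        card_le_card_of_injOn g hmaps hinj
    _ = (2 * m + 1) ^ n := by
        rw [Pi.card_Icc]
        simp only [Int.card_Icc]
        rw [prod_congr rfl fun i _ => show (⌊t i / s⌋ + m + 1 - (⌊t i / s⌋ - m)).toNat = 2 * m + 1
          by omega, prod_const, card_univ, Fintype.card_fin]

theorem card_le_of_forall_anchor {n : ℕ} (F : Finset (Cube n)) (P : Finset (ℝ × (Fin n → ℝ)))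
    {ρ : ℝ} (hF : ∀ Q ∈ F, Q.Dyadic ∧ ∃ p ∈ P, Q.side = p.1 ∧ dist Q.c p.2 ≤ ρ * p.1) :
    #F ≤ (2 * ⌈ρ⌉₊ + 1) ^ n * #P := by
  classical
  choose! a haP ha using fun Q hQ => (hF Q hQ).2
  refine card_le_mul_card_image_of_maps_to haP _ fun p _ =>
    card_le_of_dyadic_near _ p.1 p.2 fun Q hQ => ?_
  obtain ⟨hQF, rfl⟩ := mem_filter.1 hQ
  exact ⟨(hF Q hQF).1, ha Q hQF⟩

theorem card_le_of_lt_diam {n : ℕ} (E : Finset (Fin n → ℝ)) {W : ℝ} (hW : 1 ≤ W)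
    (F : Finset (Cube n))
    (hF : ∀ Q ∈ F, Q.Dyadic ∧
      W⁻¹ * Q.side < Metric.diam ((Q.scale W).toSet ∩ (E : Set (Fin n → ℝ)))) :
    (#F : ℝ) ≤ (2 * ⌈2 * W⌉₊ + 1) ^ n * (20 * W ^ 2 * #E) := by
  classical
  obtain ⟨T, hTcover, hTsum⟩ := exists_scale_nets E hW
  set K := F.image fun Q => Int.log 2 Q.side
  set P := K.biUnion fun k => (T k).image fun t => ((2 : ℝ) ^ k, t)
  have hP : (#P : ℝ) ≤ 20 * W ^ 2 * #E := calc
    (#P : ℝ) ≤ ∑ k ∈ K, (#(T k) : ℝ) := by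
      exact_mod_cast card_biUnion_le.trans (sum_le_sum fun _ _ => card_image_le)
    _ ≤ 20 * W ^ 2 * #E := hTsum K
  have hF' := card_le_of_forall_anchor F P (ρ := 2 * W) fun Q hQ => by
    obtain ⟨hQd, hdiam⟩ := hF Q hQ
    obtain ⟨k, hk⟩ := hQd.exists_side_eq
    have hd : 0 ≤ (Q.scale W).d := mul_nonneg (by linarith) hQd.d_pos.le
    obtain ⟨x, ⟨hxQ, hxE⟩, y, ⟨hyQ, hyE⟩, hxy⟩ : ∃ x ∈ (Q.scale W).toSet ∩ E,
        ∃ y ∈ (Q.scale W).toSet ∩ E, W⁻¹ * Q.side < dist x y := by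
      by_contra! h
      exact hdiam.not_ge (Metric.diam_le_of_forall_dist_le (by rw [hk]; positivity) h)
    have hWd : (Q.scale W).d = W * 2 ^ k / 2 := by
      show W * Q.d = _; rw [← hk, side]; ring
    have hx : dist x Q.c ≤ W * 2 ^ k / 2 := (dist_center_le hd hxQ).trans_eq hWd
    have hy : dist y Q.c ≤ W * 2 ^ k / 2 := (dist_center_le hd hyQ).trans_eq hWd
    obtain ⟨t, ht, hxt⟩ := hTcover k x hxE y hyE (by rwa [div_eq_inv_mul, ← hk])
      (by linarith [dist_triangle_right x y Q.c])
    refine ⟨hQd, ((2 : ℝ) ^ k, t), mem_biUnion.2 ⟨k, mem_image.2 ⟨Q, hQ, ?_⟩,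
      mem_image_of_mem _ ht⟩, hk, ?_⟩
    · rw [hk]; simpa using Int.log_zpow (R := ℝ) (b := 2) one_lt_two k
    · show dist Q.c t ≤ 2 * W * 2 ^ k
      linarith [dist_triangle Q.c x t, dist_comm x Q.c, mul_pos (one_pos.trans_le hW)
        (zpow_pos two_pos k : (0 : ℝ) < 2 ^ k)]
  calc (#F : ℝ) ≤ ((2 * ⌈2 * W⌉₊ + 1) ^ n * #P : ℕ) := by exact_mod_cast hF'
    _ ≤ (2 * ⌈2 * W⌉₊ + 1) ^ n * (20 * W ^ 2 * #E) := by push_cast; gcongr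

theorem CZSetting.card_le_of_dilate_meets {n : ℕ} (S : CZSetting n) (F : Finset (Cube n))
    (hF : ∀ Q ∈ F, Q ∈ S.CZ ∧ ((Q.scale (1 + 3 * cG)).toSet ∩ (S.E : Set (Fin n → ℝ))).Nonempty) :
    #F ≤ 3 ^ n * (13 * #S.E) := by
  classical
  choose cz hcz using fun x => (S.partition x).exists
  set P := (S.E ×ˢ Icc (-6 : ℤ) 6).image fun p => ((2 : ℝ) ^ p.2 * (cz p.1).side, p.1)
  have hP : #P ≤ 13 * #S.E := card_image_le.trans (by simp [card_product, mul_comm])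
  have hF' := card_le_of_forall_anchor F P (ρ := 1) fun Q hQ => by
    obtain ⟨hQCZ, x, hxQ, hxE⟩ := hF Q hQ
    have hQd := S.dyadic Q hQCZ
    have hxd := S.dyadic _ (hcz x).1
    have hx₁ : x ∈ (Q.scale (1 + 10 * cG)).toSet :=
      toSet_scale_subset hQd.d_pos.le (by norm_num [cG]) hxQ
    have hx₂ : x ∈ ((cz x).scale (1 + 10 * cG)).toSet := by
      refine toSet_scale_subset hxd.d_pos.le (t := 1) (by norm_num [cG]) ?_
      rw [scale_one]; exact (hcz x).2
    obtain ⟨h₁, h₂⟩ := S.goodGeom _ (hcz x).1 Q hQCZ ⟨x, hx₂, hx₁⟩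
    obtain ⟨j, hj, hside⟩ := hxd.exists_side_eq_zpow_mul hQd h₁ h₂
    refine ⟨hQd, ((2 : ℝ) ^ j * (cz x).side, x),
      mem_image.2 ⟨(x, j), mem_product.2 ⟨hxE, hj⟩, rfl⟩, hside, ?_⟩
    have hx : dist x Q.c ≤ (1 + 3 * cG) * Q.d :=
      dist_center_le (mul_nonneg (by norm_num [cG]) hQd.d_pos.le) hxQ
    have hcG : 1 + 3 * cG ≤ 2 := by norm_num [cG]
    show dist Q.c x ≤ 1 * (2 ^ j * (cz x).side)
    rw [dist_comm, one_mul, ← hside, side]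
    linarith [mul_le_mul_of_nonneg_right hcG hQd.d_pos.le]
  calc #F ≤ (2 * ⌈(1 : ℝ)⌉₊ + 1) ^ n * #P := hF'
    _ ≤ 3 ^ n * (13 * #S.E) := by rw [Nat.ceil_one]; gcongr

theorem Set.finite_and_ncard_le_of_forall_finset {α : Type*} {s : Set α} {c : ℝ}
    (h : ∀ F : Finset α, ↑F ⊆ s → (#F : ℝ) ≤ c) : s.Finite ∧ (s.ncard : ℝ) ≤ c := by
  have hfin : s.Finite := by
    by_contra hs
    obtain ⟨F, hFs, hF⟩ := Set.Infinite.exists_subset_card_eq hs (⌈c⌉₊ + 1)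
    have := h F hFs
    rw [hF] at this
    push_cast at this
    linarith [Nat.le_ceil c]
  refine ⟨hfin, ?_⟩
  rw [Set.ncard_eq_toFinset_card s hfin]
  exact h _ (by simp)

theorem statement9_general (n : ℕ) :
    ∃ A₀ : ℝ, 1 ≤ A₀ ∧ ∀ A : ℝ, A₀ ≤ A →
      ∃ C : ℝ, 0 < C ∧
        ∀ S : CZSetting n,
          {Q ∈ S.CZ | ¬ Interstellar A S.E Q}.Finite ∧
          ({Q ∈ S.CZ | ¬ Interstellar A S.E Q}.ncard : ℝ) ≤ C * S.E.card := by
  classical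
  refine ⟨1, le_rfl, fun A hA => ?_⟩
  have hW : 1 ≤ A ^ 10 := one_le_pow₀ hA
  refine ⟨(2 * ⌈2 * A ^ 10⌉₊ + 1) ^ n * (20 * (A ^ 10) ^ 2) + 3 ^ n * 13, by positivity,
    fun S => Set.finite_and_ncard_le_of_forall_finset fun F hF => ?_⟩
  let meets (Q : Cube n) : Prop :=
    ((Q.scale (1 + 3 * cG)).toSet ∩ (S.E : Set (Fin n → ℝ))).Nonempty
  have hmeets := S.card_le_of_dilate_meets {Q ∈ F | meets Q}
    fun Q hQ => ⟨(hF (mem_filter.1 hQ).1).1, (mem_filter.1 hQ).2⟩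
  have hdiam := card_le_of_lt_diam S.E hW {Q ∈ F | ¬ meets Q} fun Q hQ => by
    obtain ⟨hQF, hmeet⟩ := mem_filter.1 hQ
    obtain ⟨hQCZ, hQ⟩ := hF hQF
    exact ⟨S.dyadic Q hQCZ,
      lt_of_not_ge fun hle => hQ ⟨hle, Set.not_nonempty_iff_eq_empty.1 hmeet⟩⟩
  calc (#F : ℝ) = #{Q ∈ F | meets Q} + #{Q ∈ F | ¬ meets Q} := by
        exact_mod_cast (card_filter_add_card_filter_not _).symm
    _ ≤ 3 ^ n * (13 * #S.E) + (2 * ⌈2 * A ^ 10⌉₊ + 1) ^ n * (20 * (A ^ 10) ^ 2 * #S.E) :=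
        add_le_add (by exact_mod_cast hmeets) hdiam
    _ = _ := by ring

/-- **Lemma 5.3 (Lemma A): the number of non-interstellar CZ cubes is at most `C(A)·N`.** -/
theorem statement9 (n : ℕ) (hn : 1 ≤ n) :
    ∃ A₀ : ℝ, 1 ≤ A₀ ∧ ∀ A : ℝ, A₀ ≤ A →
      ∃ C : ℝ, 0 < C ∧
        ∀ S : CZSetting n,
          {Q ∈ S.CZ | ¬ Interstellar A S.E Q}.Finite ∧
          ({Q ∈ S.CZ | ¬ Interstellar A S.E Q}.ncard : ℝ) ≤ C * S.E.card :=
  statement9_general n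
end
end

section
/- Assume the CZ-decomposition setting in dimension n. There exist A₀ ≥ 1 and C > 0 depending only on n such that for every A ≥ A₀, the number of distinct clusters S ⊆ E is at most C·N. -/
/-!
Two clusters that meet are nested: if `S` and `T` share a point while each has a point outside
the other, the separation conditions give `A³·diam S ≤ diam T` and `A³·diam T ≤ diam S`, which is
impossible for `A > 1` since clusters have positive diameter. A laminar family of subsets of `E`
whose members have at least two elements has at most `#E` members, so there are at most `N`
clusters.
-/

noncomputable section

namespace Finset

variable {α : Type*}

def IsLaminar (F : Finset (Finset α)) : Prop :=
  ∀ S ∈ F, ∀ T ∈ F, ¬Disjoint S T → S ⊆ T ∨ T ⊆ S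

namespace IsLaminar

variable {F : Finset (Finset α)} {S T : Finset α}

lemma mono (hF : IsLaminar F) {F' : Finset (Finset α)} (h : F' ⊆ F) : IsLaminar F' :=
  fun S hS T hT => hF S (h hS) T (h hT)

lemma subset_of_card_minimal (hF : IsLaminar F) (hS : S ∈ F) (hmin : ∀ U ∈ F, #S ≤ #U)
    (hT : T ∈ F) {x : α} (hxS : x ∈ S) (hxT : x ∈ T) : S ⊆ T := by
  rcases hF S hS T hT (not_disjoint_iff.mpr ⟨x, hxS, hxT⟩) with hST | hTS
  · exact hST
  · exact (eq_of_subset_of_card_le hTS (hmin T hT)).ge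

variable [DecidableEq α]

lemma image_erase (hF : IsLaminar F) (b : α) : IsLaminar (F.image (·.erase b)) := by
  simp only [IsLaminar, mem_image, forall_exists_index, and_imp, forall_apply_eq_imp_iff₂]
  intro S hS T hT hST
  obtain ⟨x, hxS, hxT⟩ := not_disjoint_iff.mp hST
  exact (hF S hS T hT (not_disjoint_iff.mpr ⟨x, mem_of_mem_erase hxS, mem_of_mem_erase hxT⟩)).imp
    (erase_subset_erase b) (erase_subset_erase b)

/-- Erasing a point `b` of a smallest member `S` is injective on the family: a member containing
`b` contains `S`, hence also a second point `a ∈ S`, which then forces `b` into every member that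
agrees with it off `b`. -/
lemma injOn_erase (hF : IsLaminar F) (hS : S ∈ F) (hmin : ∀ U ∈ F, #S ≤ #U) {a b : α}
    (ha : a ∈ S) (hb : b ∈ S) (hab : a ≠ b) : Set.InjOn (·.erase b) (F : Set (Finset α)) := by
  have mem_of_erase_eq : ∀ T ∈ F, ∀ T' ∈ F, T.erase b = T'.erase b → b ∈ T → b ∈ T' := by
    intro T hT T' hT' hTT' hbT
    have haT' : a ∈ T'.erase b :=
      hTT' ▸ mem_erase.mpr ⟨hab, hF.subset_of_card_minimal hS hmin hT hb hbT ha⟩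
    exact hF.subset_of_card_minimal hS hmin hT' ha (mem_of_mem_erase haT') hb
  intro T hT T' hT' hTT'
  by_cases hbT : b ∈ T
  · exact erase_injOn' b hbT (mem_of_erase_eq T hT T' hT' hTT' hbT) hTT'
  · have hbT' : b ∉ T' := fun h => hbT (mem_of_erase_eq T' hT' T hT hTT'.symm h)
    simpa only [erase_eq_of_notMem hbT, erase_eq_of_notMem hbT'] using hTT'

lemma two_le_card_erase (hF : IsLaminar F) (hF₂ : ∀ U ∈ F, 2 ≤ #U) (hS : S ∈ F)
    (hmin : ∀ U ∈ F, #S ≤ #U) {b : α} (hb : b ∈ S) (hT : T ∈ F) (hTS : T ≠ S) :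
    2 ≤ #(T.erase b) := by
  by_cases hbT : b ∈ T
  · have hST : S ⊂ T :=
      ssubset_of_subset_of_ne (hF.subset_of_card_minimal hS hmin hT hb hbT) hTS.symm
    have := card_lt_card hST
    have := hF₂ S hS
    rw [card_erase_of_mem hbT]
    omega
  · rw [erase_eq_of_notMem hbT]
    exact hF₂ T hT

/-- Removing a smallest member `S ∋ b` and erasing `b` from the others gives a family of the same
kind inside `E.erase b`, which drives an induction on `E`. -/
theorem card_le (hF : IsLaminar F) {E : Finset α} (hFE : ∀ S ∈ F, S ⊆ E)
    (hF₂ : ∀ S ∈ F, 2 ≤ #S) : #F ≤ #E := by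
  induction E using strongInduction generalizing F with
  | H E ih =>
  obtain rfl | hne := F.eq_empty_or_nonempty
  · simp
  obtain ⟨S, hS, hmin⟩ := F.exists_min_image card hne
  obtain ⟨a, ha, b, hb, hab⟩ := one_lt_card.mp (hF₂ S hS)
  have hF' : #((F.erase S).image (·.erase b)) ≤ #(E.erase b) :=
    ih _ (erase_ssubset (hFE S hS hb)) ((hF.mono (erase_subset S F)).image_erase b)
      (forall_mem_image.mpr fun T hT => erase_subset_erase b (hFE T (mem_of_mem_erase hT)))
      (forall_mem_image.mpr fun T hT =>
        hF.two_le_card_erase hF₂ hS hmin hb (mem_of_mem_erase hT) (ne_of_mem_erase hT))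
  rw [card_image_of_injOn ((hF.injOn_erase hS hmin ha hb hab).mono (erase_subset S F)),
    card_erase_of_mem hS, card_erase_of_mem (hFE S hS hb)] at hF'
  have := card_pos.mpr hne
  have := card_pos.mpr ⟨b, hFE S hS hb⟩
  omega

end IsLaminar

end Finset

open Finset

section Clusters

variable {n : ℕ} {A : ℝ} {E S T : Finset (Fin n → ℝ)}

lemma IsCluster.diam_pos (hS : IsCluster A E S) : 0 < Metric.diam (S : Set (Fin n → ℝ)) := by
  obtain ⟨u, hu, v, hv, huv⟩ := one_lt_card.mp hS.2.1
  exact (dist_pos.mpr huv).trans_le (Metric.dist_le_diam_of_mem S.finite_toSet.isBounded hu hv)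

lemma IsCluster.pow_three_mul_diam_le_diam (hS : IsCluster A E S) (hTE : T ⊆ E) {x z : Fin n → ℝ}
    (hxS : x ∈ S) (hxT : x ∈ T) (hzT : z ∈ T) (hzS : z ∉ S) :
    A ^ 3 * Metric.diam (S : Set (Fin n → ℝ)) ≤ Metric.diam (T : Set (Fin n → ℝ)) :=
  (hS.2.2 x hxS z (mem_sdiff.mpr ⟨hTE hzT, hzS⟩)).trans
    (Metric.dist_le_diam_of_mem T.finite_toSet.isBounded hxT hzT)

lemma IsCluster.subset_or_subset (hA : 1 < A) (hS : IsCluster A E S) (hT : IsCluster A E T)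
    (hST : ¬Disjoint S T) : S ⊆ T ∨ T ⊆ S := by
  by_contra! h
  obtain ⟨x, hxS, hxT⟩ := not_disjoint_iff.mp hST
  obtain ⟨y, hyS, hyT⟩ := not_subset.mp h.1
  obtain ⟨z, hzT, hzS⟩ := not_subset.mp h.2
  have hS_le := hS.pow_three_mul_diam_le_diam hT.1 hxS hxT hzT hzS
  have hT_le := hT.pow_three_mul_diam_le_diam hS.1 hxT hxS hyS hyT
  have hA3 : 1 < A ^ 3 := one_lt_pow₀ hA three_ne_zero
  nlinarith [hS.diam_pos, hT.diam_pos]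

lemma ncard_setOf_isCluster_le (hA : 1 < A) : {T | IsCluster A E T}.ncard ≤ #E := by
  classical
  have hclusters : {T | IsCluster A E T} = ↑(E.powerset.filter (IsCluster A E)) := by
    ext T
    simpa using fun h : IsCluster A E T => h.1
  rw [hclusters, Set.ncard_coe_finset]
  refine IsLaminar.card_le ?_ (fun T hT => mem_powerset.mp (mem_filter.mp hT).1)
    (fun T hT => (mem_filter.mp hT).2.2.1)
  intro S hS T hT
  exact (mem_filter.mp hS).2.subset_or_subset hA (mem_filter.mp hT).2

end Clusters

theorem statement10_general (n : ℕ) :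
    ∃ A₀ C : ℝ, 1 ≤ A₀ ∧ 0 < C ∧
      ∀ A : ℝ, A₀ ≤ A →
        ∀ S : CZSetting n,
          ({T : Finset (Fin n → ℝ) | IsCluster A S.E T}.ncard : ℝ) ≤ C * S.E.card := by
  refine ⟨2, 1, one_le_two, one_pos, fun A hA S => ?_⟩
  rw [one_mul]
  exact_mod_cast ncard_setOf_isCluster_le (by linarith)

/-- **Lemma 5.4 (Lemma B): the number of distinct clusters is at most `C·N`.** -/
theorem statement10 (n : ℕ) (hn : 1 ≤ n) :
    ∃ A₀ C : ℝ, 1 ≤ A₀ ∧ 0 < C ∧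
      ∀ A : ℝ, A₀ ≤ A →
        ∀ S : CZSetting n,
          ({T : Finset (Fin n → ℝ) | IsCluster A S.E T}.ncard : ℝ) ≤ C * S.E.card :=
  statement10_general n
end
end

section
/- Assume the CZ-decomposition setting in dimension n, with a parameter A ≥ 1 and a choice of representative x(S) ∈ S for each cluster S. There exists A₀ ≥ 1 depending only on n such that for every A ≥ A₀ the following holds: if Q ∈ CZ is an interstellar cube, then there exists a cluster S such that (1+c_G)Q ⊆ H(S). -/
noncomputable section

lemma dist_le_of_mem_scale {n : ℕ} (Q : Cube n) {t : ℝ} {x : Fin n → ℝ}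
    (ht : 0 ≤ t * Q.d) (hx : x ∈ (Q.scale t).toSet) : dist x Q.c ≤ t * Q.d := by
  rw [dist_pi_le_iff ht]
  intro i
  simp only [Cube.toSet, Cube.scale, Set.mem_setOf_eq] at hx
  obtain ⟨h1, h2⟩ := hx i
  rw [Real.dist_eq, abs_le]
  constructor <;> linarith

lemma le_dist_of_notMem_scale {n : ℕ} (Q : Cube n) {t : ℝ} {x : Fin n → ℝ}
    (hx : x ∉ (Q.scale t).toSet) : t * Q.d ≤ dist x Q.c := by
  simp only [Cube.toSet, Cube.scale, Set.mem_setOf_eq, not_forall] at hx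
  obtain ⟨i, hi⟩ := hx
  have h := dist_le_pi_dist x Q.c i
  rw [Real.dist_eq] at h
  rcases not_and_or.mp hi with h1 | h2
  · push_neg at h1
    have h3 := le_abs_self (Q.c i - x i)
    have h4 : |Q.c i - x i| = |x i - Q.c i| := abs_sub_comm _ _
    linarith
  · push_neg at h2
    have h3 := le_abs_self (x i - Q.c i)
    linarith

lemma mem_scale_mono {n : ℕ} (Q : Cube n) {s t : ℝ} (hd : 0 ≤ Q.d) (hst : s ≤ t)
    {x : Fin n → ℝ} (hx : x ∈ (Q.scale s).toSet) : x ∈ (Q.scale t).toSet := by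
  simp only [Cube.toSet, Cube.scale, Set.mem_setOf_eq] at hx ⊢
  intro i
  obtain ⟨h1, h2⟩ := hx i
  have : s * Q.d ≤ t * Q.d := mul_le_mul_of_nonneg_right hst hd
  exact ⟨by linarith, by linarith⟩

set_option maxHeartbeats 1000000 in
/-- **Lemma 5.5 (Lemma 1): every interstellar cube has `(1+c_G)Q` contained in the
halo of some cluster.** -/
theorem statement11 (n : ℕ) (hn : 1 ≤ n) :
    ∃ A₀ : ℝ, 1 ≤ A₀ ∧ ∀ A : ℝ, A₀ ≤ A →
      ∀ (S : CZSetting n) (xR : Finset (Fin n → ℝ) → (Fin n → ℝ)),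
        (∀ T : Finset (Fin n → ℝ), IsCluster A S.E T → xR T ∈ T) →
        ∀ Q ∈ S.CZ, Interstellar A S.E Q →
          ∃ T : Finset (Fin n → ℝ), IsCluster A S.E T ∧
            (Q.scale (1 + cG)).toSet ⊆ Halo A S.E T (xR T) := by
  classical
  refine ⟨100, by norm_num, fun A hA S xR hxR Q hQ hint => ?_⟩
  have hA1 : (1:ℝ) ≤ A := le_trans (by norm_num) hA
  have hA0 : (0:ℝ) < A := by linarith
  obtain ⟨k, j, hdk, -⟩ := S.dyadic Q hQ
  have hd : 0 < Q.d := by rw [hdk]; positivity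
  set d := Q.d with hd_def
  -- power bounds
  have hB : (10:ℝ)^20 ≤ A^10 := by
    calc (10:ℝ)^20 = 100^10 := by norm_num
    _ ≤ A^10 := pow_le_pow_left₀ (by norm_num) hA 10
  have hB0 : (0:ℝ) < A^10 := by positivity
  have h9 : (10:ℝ)^18 ≤ A^9 := by
    calc (10:ℝ)^18 = 100^9 := by norm_num
    _ ≤ A^9 := pow_le_pow_left₀ (by norm_num) hA 9
  have hApow : (10:ℝ)^18 * A ≤ A^10 := by
    calc (10:ℝ)^18 * A ≤ A^9 * A := mul_le_mul_of_nonneg_right h9 hA0.le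
    _ = A^10 := (pow_succ A 9).symm
  have hBinv : (A^10)⁻¹ ≤ ((10:ℝ)^20)⁻¹ :=
    inv_anti₀ (by norm_num) hB
  -- the cluster
  set T : Finset (Fin n → ℝ) := S.E.filter (fun y => y ∈ (Q.scale (A^10)).toSet) with hTdef
  have hTE : T ⊆ S.E := Finset.filter_subset _ _
  have hmemT : ∀ y, y ∈ T ↔ y ∈ S.E ∧ y ∈ (Q.scale (A^10)).toSet := by
    intro y; simp [hTdef]
  -- the big intersection set
  set D : Set (Fin n → ℝ) := (Q.scale (A^10)).toSet ∩ (S.E : Set (Fin n → ℝ)) with hDdef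
  have hDfin : D.Finite := Set.Finite.inter_of_right S.E.finite_toSet _
  have hDbdd : Bornology.IsBounded D := hDfin.isBounded
  have hTD : (T : Set (Fin n → ℝ)) ⊆ D := by
    intro y hy
    rw [Finset.mem_coe, hmemT] at hy
    exact ⟨hy.2, hy.1⟩
  have hdiamD : Metric.diam D ≤ (A^10)⁻¹ * (2 * d) := hint.1
  have hdiamT : Metric.diam (T : Set (Fin n → ℝ)) ≤ (A^10)⁻¹ * (2 * d) :=
    le_trans (Metric.diam_mono hTD hDbdd) hdiamD
  -- a point of E in 9Q
  have hdense := S.dense Q hQ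
  have hne : ((S.E : Set (Fin n → ℝ)) ∩ (Q.scale 9).toSet).Nonempty := by
    rw [Set.nonempty_iff_ne_empty]
    intro h
    rw [h, Set.ncard_empty] at hdense
    omega
  obtain ⟨e, heE, he9⟩ := hne
  have h9le : (9:ℝ) ≤ A^10 := le_trans (by norm_num) hB
  have heD : e ∈ D := ⟨mem_scale_mono Q hd.le h9le he9, heE⟩
  have hec : dist e Q.c ≤ 9 * d :=
    dist_le_of_mem_scale Q (by positivity) he9
  -- all points of T within 10 d of center
  have hF3 : ∀ y ∈ T, dist y Q.c ≤ 10 * d := by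
    intro y hy
    have hyD : y ∈ D := hTD hy
    have h1 : dist y e ≤ Metric.diam D := Metric.dist_le_diam_of_mem hDbdd hyD heD
    have h2 : (A^10)⁻¹ * (2*d) ≤ d := by
      have : (A^10)⁻¹ * (2*d) ≤ ((10:ℝ)^20)⁻¹ * (2*d) :=
        mul_le_mul_of_nonneg_right hBinv (by positivity)
      nlinarith [hd]
    calc dist y Q.c ≤ dist y e + dist e Q.c := dist_triangle _ _ _
    _ ≤ 10 * d := by linarith
  -- points of E outside T are far
  have hF4 : ∀ z ∈ S.E, z ∉ T → A^10 * d ≤ dist z Q.c := by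
    intro z hz hzT
    have : z ∉ (Q.scale (A^10)).toSet := by
      intro h; exact hzT ((hmemT z).2 ⟨hz, h⟩)
    exact le_dist_of_notMem_scale Q this
  -- card
  have hcard : 2 ≤ T.card := by
    have hsub : ((S.E : Set (Fin n → ℝ)) ∩ (Q.scale 9).toSet) ⊆ (T : Set (Fin n → ℝ)) := by
      rintro y ⟨hy1, hy2⟩
      rw [Finset.mem_coe, hmemT]
      exact ⟨hy1, mem_scale_mono Q hd.le h9le hy2⟩
    have := Set.ncard_le_ncard hsub T.finite_toSet
    rw [Set.ncard_coe_finset] at this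
    omega
  -- cluster separation bound
  have hdiamT' : 0 ≤ Metric.diam (T : Set (Fin n → ℝ)) := Metric.diam_nonneg
  have hclusterbound : ∀ x ∈ T, ∀ y ∈ S.E \ T,
      A ^ 3 * Metric.diam (T : Set (Fin n → ℝ)) ≤ dist x y := by
    intro x hx y hy
    rw [Finset.mem_sdiff] at hy
    have hxc := hF3 x hx
    have hyc := hF4 y hy.1 hy.2
    have htri : dist y Q.c ≤ dist y x + dist x Q.c := dist_triangle _ _ _
    have hxy : A^10 * d - 10 * d ≤ dist x y := by
      rw [dist_comm x y]; linarith
    have hup : A ^ 3 * Metric.diam (T : Set (Fin n → ℝ)) ≤ A^3 * ((A^10)⁻¹ * (2*d)) :=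
      mul_le_mul_of_nonneg_left hdiamT (by positivity)
    have hkey : A^3 * ((A^10)⁻¹ * (2*d)) ≤ 2 * d := by
      have h1 : A^3 * (A^10)⁻¹ ≤ 1 := by
        rw [← div_eq_mul_inv, div_le_one hB0]
        exact pow_le_pow_right₀ hA1 (by norm_num)
      calc A^3 * ((A^10)⁻¹ * (2*d)) = (A^3 * (A^10)⁻¹) * (2*d) := by ring
      _ ≤ 1 * (2*d) := mul_le_mul_of_nonneg_right h1 (by linarith)
      _ = 2 * d := by ring
    have hfin : 2 * d ≤ A^10 * d - 10 * d := by
      nlinarith [mul_pos (show (0:ℝ) < A^10 - 12 by linarith) hd]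
    linarith
  have hcluster : IsCluster A S.E T := ⟨hTE, hcard, hclusterbound⟩
  refine ⟨T, hcluster, ?_⟩
  -- the halo inclusion
  have hxT : xR T ∈ T := hxR T hcluster
  have hxTc : dist (xR T) Q.c ≤ 10 * d := hF3 _ hxT
  have hxTfar : (1 + 3*cG) * d ≤ dist (xR T) Q.c := by
    apply le_dist_of_notMem_scale
    intro h
    have : xR T ∈ (Q.scale (1 + 3*cG)).toSet ∩ (S.E : Set (Fin n → ℝ)) :=
      ⟨h, hTE hxT⟩
    rw [hint.2] at this
    exact this
  intro x hx
  have hxc : dist x Q.c ≤ (1 + cG) * d :=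
    dist_le_of_mem_scale Q (by rw [cG]; positivity) hx
  have hcG : cG = 1/1000000 := rfl
  have hgap : 2 * cG * d ≤ dist x (xR T) := by
    have htri : dist (xR T) Q.c ≤ dist (xR T) x + dist x Q.c := dist_triangle _ _ _
    rw [dist_comm x (xR T)]
    rw [hcG] at hxTfar hxc ⊢
    linarith
  have hxxT : dist x (xR T) ≤ 12 * d := by
    have htri : dist x (xR T) ≤ dist x Q.c + dist Q.c (xR T) := dist_triangle _ _ _
    rw [dist_comm Q.c (xR T)] at htri
    rw [hcG] at hxc
    linarith
  constructor
  · -- A * diam T < dist x (xR T)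
    have h1 : A * Metric.diam (T : Set (Fin n → ℝ)) ≤ A * ((A^10)⁻¹ * (2*d)) :=
      mul_le_mul_of_nonneg_left hdiamT hA0.le
    have h2 : A * ((A^10)⁻¹ * (2*d)) < 2 * cG * d := by
      have hAinv : A * (A^10)⁻¹ ≤ ((10:ℝ)^18)⁻¹ := by
        rw [mul_inv_le_iff₀ hB0]
        calc A = ((10:ℝ)^18)⁻¹ * ((10:ℝ)^18 * A) :=
              (inv_mul_cancel_left₀ (by norm_num) A).symm
        _ ≤ ((10:ℝ)^18)⁻¹ * A^10 := mul_le_mul_of_nonneg_left hApow (by positivity)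
      have h3 : A * ((A^10)⁻¹ * (2*d)) ≤ ((10:ℝ)^18)⁻¹ * (2*d) := by
        calc A * ((A^10)⁻¹ * (2*d)) = (A * (A^10)⁻¹) * (2*d) := by ring
        _ ≤ ((10:ℝ)^18)⁻¹ * (2*d) := mul_le_mul_of_nonneg_right hAinv (by linarith)
      have h4 : ((10:ℝ)^18)⁻¹ * (2*d) < 2 * cG * d := by
        rw [hcG, show ((10:ℝ)^18)⁻¹ = 1/10^18 by norm_num]
        linarith
      linarith
    linarith
  · -- ∀ y ∈ T, ∀ z ∈ E \ T, A * dist x (xR T) < dist y z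
    intro y hy z hz
    rw [Finset.mem_sdiff] at hz
    have hyc := hF3 y hy
    have hzc := hF4 z hz.1 hz.2
    have htri : dist z Q.c ≤ dist z y + dist y Q.c := dist_triangle _ _ _
    have hyz : A^10 * d - 10 * d ≤ dist y z := by
      rw [dist_comm y z]; linarith
    have hup : A * dist x (xR T) ≤ 12 * A * d := by
      calc A * dist x (xR T) ≤ A * (12 * d) := mul_le_mul_of_nonneg_left hxxT hA0.le
      _ = 12 * A * d := by ring
    have hkey : 12 * A * d + 10 * d < A^10 * d := by
      have h1 : 12 * A + 10 < A^10 := by linarith [hApow, hA]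
      have h2 := mul_lt_mul_of_pos_right h1 hd
      linarith [h2]
    linarith
end
end

section
/- Assume the CZ-decomposition setting in dimension n, with a parameter A ≥ 1 and a choice of representative x(S) ∈ S for each cluster S. There exists A₀ ≥ 1 depending only on n such that for every A ≥ A₀ the following holds: for any two distinct clusters S and S', the halos H(S) and H(S') are disjoint. -/
noncomputable section

/-- Auxiliary numeric lemma for the halo disjointness argument. -/
lemma haloAux {A dT dxT dxT' D : ℝ} (hA : 2 ≤ A) (hd : dxT ≤ dxT' + dT)
    (h1 : A * dT < dxT) (h2 : A * dxT' < D) (hD : D ≤ dT) (hx' : 0 ≤ dxT') : False := by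
  nlinarith [mul_nonneg (by linarith : (0:ℝ) ≤ A) hx']

lemma dist_le_diam_finset {n : ℕ} (T : Finset (Fin n → ℝ)) {a b : Fin n → ℝ}
    (ha : a ∈ T) (hb : b ∈ T) : dist a b ≤ Metric.diam (T : Set (Fin n → ℝ)) :=
  Metric.dist_le_diam_of_mem T.finite_toSet.isBounded
    (Finset.mem_coe.mpr ha) (Finset.mem_coe.mpr hb)

/-- **Lemma 5.7 (Lemma 3): halos of distinct clusters are disjoint.** -/
theorem statement13 (n : ℕ) (hn : 1 ≤ n) :
    ∃ A₀ : ℝ, 1 ≤ A₀ ∧ ∀ A : ℝ, A₀ ≤ A →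
      ∀ (S : CZSetting n) (xR : Finset (Fin n → ℝ) → (Fin n → ℝ)),
        (∀ T : Finset (Fin n → ℝ), IsCluster A S.E T → xR T ∈ T) →
        ∀ T T' : Finset (Fin n → ℝ), IsCluster A S.E T → IsCluster A S.E T' → T ≠ T' →
          Halo A S.E T (xR T) ∩ Halo A S.E T' (xR T') = ∅ := by
  refine ⟨2, by norm_num, fun A hA S xR hxR T T' hT hT' hne => ?_⟩
  rw [Set.eq_empty_iff_forall_notMem]
  rintro x ⟨hx1, hx2⟩
  obtain ⟨h1, h2⟩ := hx1
  obtain ⟨h1', h2'⟩ := hx2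
  set xT := xR T with hxTdef
  set xT' := xR T' with hxT'def
  have hxTT : xT ∈ T := hxR T hT
  have hxT'T' : xT' ∈ T' := hxR T' hT'
  have hTE : T ⊆ S.E := hT.1
  have hT'E : T' ⊆ S.E := hT'.1
  by_cases hc1 : xT' ∈ T
  · -- xT' ∈ T
    by_cases hc2 : xT ∈ T'
    · -- both crossed; find a point in the symmetric difference
      by_cases hsub : T ⊆ T'
      · obtain ⟨p, hpT', hpT⟩ := Finset.exists_of_ssubset (Finset.ssubset_iff_subset_ne.mpr ⟨hsub, hne⟩)
        -- p ∈ T' \ T : use swapped roles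
        have hz : p ∈ S.E \ T := Finset.mem_sdiff.mpr ⟨hT'E hpT', hpT⟩
        have key := h2 xT hxTT p hz
        have hDd : dist xT p ≤ Metric.diam (T' : Set (Fin n → ℝ)) :=
          dist_le_diam_finset T' hc2 hpT'
        have htri : dist x xT' ≤ dist x xT + Metric.diam (T' : Set (Fin n → ℝ)) :=
          le_trans (dist_triangle x xT xT')
            (by linarith [dist_le_diam_finset T' hc2 hxT'T'])
        exact haloAux hA htri h1' key hDd dist_nonneg
      · obtain ⟨p, hpT, hpT'⟩ := Finset.not_subset.mp hsub
        have hz : p ∈ S.E \ T' := Finset.mem_sdiff.mpr ⟨hTE hpT, hpT'⟩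
        have key := h2' xT' hxT'T' p hz
        have hDd : dist xT' p ≤ Metric.diam (T : Set (Fin n → ℝ)) :=
          dist_le_diam_finset T hc1 hpT
        have htri : dist x xT ≤ dist x xT' + Metric.diam (T : Set (Fin n → ℝ)) :=
          le_trans (dist_triangle x xT' xT)
            (by linarith [dist_le_diam_finset T hc1 hxTT])
        exact haloAux hA htri h1 key hDd dist_nonneg
    · -- xT' ∈ T, xT ∉ T'
      have hz : xT ∈ S.E \ T' := Finset.mem_sdiff.mpr ⟨hTE hxTT, hc2⟩
      have key := h2' xT' hxT'T' xT hz
      have hDd : dist xT' xT ≤ Metric.diam (T : Set (Fin n → ℝ)) :=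
        dist_le_diam_finset T hc1 hxTT
      have htri : dist x xT ≤ dist x xT' + Metric.diam (T : Set (Fin n → ℝ)) :=
        le_trans (dist_triangle x xT' xT) (by linarith)
      exact haloAux hA htri h1 key hDd dist_nonneg
  · by_cases hc2 : xT ∈ T'
    · -- xT ∈ T', xT' ∉ T
      have hz : xT' ∈ S.E \ T := Finset.mem_sdiff.mpr ⟨hT'E hxT'T', hc1⟩
      have key := h2 xT hxTT xT' hz
      have hDd : dist xT xT' ≤ Metric.diam (T' : Set (Fin n → ℝ)) :=
        dist_le_diam_finset T' hc2 hxT'T'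
      have htri : dist x xT' ≤ dist x xT + Metric.diam (T' : Set (Fin n → ℝ)) :=
        le_trans (dist_triangle x xT xT') (by linarith)
      exact haloAux hA htri h1' key hDd dist_nonneg
    · -- neither crosses
      have hz : xT' ∈ S.E \ T := Finset.mem_sdiff.mpr ⟨hT'E hxT'T', hc1⟩
      have hz' : xT ∈ S.E \ T' := Finset.mem_sdiff.mpr ⟨hTE hxTT, hc2⟩
      have k1 := h2 xT hxTT xT' hz
      have k2 := h2' xT' hxT'T' xT hz'
      have hne' : xT ≠ xT' := fun h => hc1 (h ▸ hxTT)
      have hdpos : 0 < dist xT xT' := dist_pos.mpr hne'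
      have htri := dist_triangle xT x xT'
      rw [dist_comm xT' xT] at k2
      rw [dist_comm xT x] at htri
      nlinarith [dist_nonneg (x := x) (y := xT), dist_nonneg (x := x) (y := xT')]
end
end

section
/- Assume the CZ-decomposition setting in dimension n. There exist constants C > 0 and c ∈ (0,1) depending only on n such that for every Q ∈ CZ there is a finite sequence Q₁, Q₂, …, Q_L of cubes of CZ with: Q₁ = Q; Q_L is a keystone cube; (1+c_G)Q_l ∩ (1+c_G)Q_{l+1} ≠ ∅ for l = 1, …, L−1; and δ_{Q_k} ≤ C·(1−c)^{k−l}·δ_{Q_l} for all 1 ≤ l ≤ k ≤ L. -/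
/-!
Since `9Q` contains two distinct points of the finite set `E`, all cubes of `CZ` have sidelength
at least some `m > 0`; hence points closer than `c_G m` lie in linked cubes.

If `Q` is not keystone, a smaller cube `Q'` meets `100Q`. Walk from `Q` towards a point of
`Q' ∩ 100Q` through the dyadic cells of sidelength `δ_Q`, moving by at most one cell in each
coordinate per step, so in at most `50` steps; neighbouring cells contain points as close as we
like. A cube of `CZ` at least as large as `Q` is a union of such cells, so the cubes met along the
walk are linked up to and including the first one smaller than `Q`. Before it they are at most
`64⁵⁰` times larger than `Q` by good geometry, and being dyadic it is at most half as large as `Q`.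
Iterating halves the sidelength every `50` steps, which is the decay with `(1 - 1/100)⁵⁰ ≥ 1/2`,
and the lower bound `m` forces the iteration to stop at a keystone cube.
-/

noncomputable section

def Linked {n : ℕ} (Q Q' : Cube n) : Prop :=
  ((Q.scale (1 + cG)).toSet ∩ (Q'.scale (1 + cG)).toSet).Nonempty

lemma cG_pos : 0 < cG := by norm_num [cG]

lemma Int.ceil_div_mem_Ioc_iff {ℓ x : ℝ} (hℓ : 0 < ℓ) (N M : ℤ) :
    x ∈ Set.Ioc (N * ℓ) (M * ℓ) ↔ ⌈x / ℓ⌉ ∈ Set.Ioc N M := by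
  rw [Set.mem_Ioc, Set.mem_Ioc, Int.lt_ceil, Int.ceil_le, lt_div_iff₀ hℓ, div_le_iff₀ hℓ]

lemma Int.abs_ceil_sub_ceil_le {x y : ℝ} {N : ℤ} (h : |x - y| ≤ N) : |⌈x⌉ - ⌈y⌉| ≤ N := by
  rw [abs_le] at h ⊢
  have h₁ : ⌈x⌉ ≤ ⌈y⌉ + N := by
    rw [← Int.ceil_add_intCast]; exact Int.ceil_mono (by linarith)
  have h₂ : ⌈y⌉ ≤ ⌈x⌉ + N := by
    rw [← Int.ceil_add_intCast]; exact Int.ceil_mono (by linarith)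
  omega

namespace Cube

variable {n : ℕ} {Q Q' : Cube n} {x y : Fin n → ℝ}

lemma abs_sub_c_le (hx : x ∈ Q.toSet) (i : Fin n) : |x i - Q.c i| ≤ Q.d :=
  abs_le.2 ⟨by linarith [(hx i).1], by linarith [(hx i).2]⟩

lemma c_mem_toSet (hQ : 0 < Q.d) : Q.c ∈ Q.toSet :=
  fun _ => ⟨by linarith, by linarith⟩

lemma toSet_scale_subset_s15 {s t : ℝ} (hQ : 0 ≤ Q.d) (hst : s ≤ t) :
    (Q.scale s).toSet ⊆ (Q.scale t).toSet := by
  intro x hx i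
  have h := hx i
  have := mul_le_mul_of_nonneg_right hst hQ
  simp only [scale] at h ⊢
  exact ⟨by linarith [h.1], by linarith [h.2]⟩

lemma mem_scale_of_close {ε : ℝ} (hx : x ∈ Q.toSet) (hxy : ∀ i, |y i - x i| < ε * Q.d) :
    y ∈ (Q.scale (1 + ε)).toSet := by
  intro i
  have h := abs_lt.1 (hxy i)
  have : (1 + ε) * Q.d = Q.d + ε * Q.d := by ring
  simp only [scale]
  exact ⟨by linarith [(hx i).1], by linarith [(hx i).2]⟩

lemma linked_of_close (hQ : 0 ≤ Q.d) (hx : x ∈ Q.toSet) (hy : y ∈ Q'.toSet)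
    (hxy : ∀ i, |x i - y i| < cG * Q'.d) : Linked Q Q' := by
  refine ⟨x, ?_, mem_scale_of_close hy hxy⟩
  have hQ1 : Q.toSet ⊆ (Q.scale 1).toSet := fun z hz i => by simpa [scale] using hz i
  exact toSet_scale_subset_s15 hQ (by linarith [cG_pos]) (hQ1 hx)

namespace Dyadic

lemma d_pos_s15 (hQ : Q.Dyadic) : 0 < Q.d := by
  obtain ⟨k, j, hd, -⟩ := hQ
  rw [hd]; positivity

lemma side_eq (hQ : Q.Dyadic) : ∃ k : ℤ, Q.side = 2 ^ k := by
  obtain ⟨k, j, hd, -⟩ := hQ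
  exact ⟨k, by rw [side, hd]; ring⟩

lemma side_le_half_of_lt (hQ : Q.Dyadic) (hQ' : Q'.Dyadic) (h : Q'.side < Q.side) :
    Q'.side ≤ Q.side / 2 := by
  obtain ⟨k, hk⟩ := hQ.side_eq
  obtain ⟨k', hk'⟩ := hQ'.side_eq
  rw [hk, hk'] at h ⊢
  have hlt : k' < k := (zpow_lt_zpow_iff_right₀ (by norm_num : (1:ℝ) < 2)).1 h
  calc (2:ℝ) ^ k' ≤ 2 ^ (k - 1) := zpow_le_zpow_right₀ (by norm_num) (by omega)
    _ = 2 ^ k / 2 := by rw [zpow_sub_one₀ (by norm_num)]; ring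

/-- A dyadic cube of sidelength at least `2 ^ k` is a union of dyadic cells of sidelength
`2 ^ k`. -/
lemma exists_mem_iff_ceil (hQ : Q.Dyadic) {k : ℤ} (hk : (2:ℝ) ^ k ≤ Q.side) :
    ∃ N M : Fin n → ℤ, ∀ x, x ∈ Q.toSet ↔ ∀ i, N i < ⌈x i / 2 ^ k⌉ ∧ ⌈x i / 2 ^ k⌉ ≤ M i := by
  obtain ⟨k', j, hd, hc⟩ := hQ
  have hside : Q.side = 2 ^ k' := by rw [side, hd]; ring
  rw [hside] at hk
  obtain ⟨e, he⟩ : ∃ e : ℕ, k' = k + e :=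
    (Int.le.dest ((zpow_le_zpow_iff_right₀ (by norm_num : (1:ℝ) < 2)).1 hk)).imp fun _ h => h.symm
  have hpow : (2:ℝ) ^ k' = ((2 ^ e : ℤ) : ℝ) * 2 ^ k := by
    rw [he, zpow_add₀ (by norm_num), zpow_natCast]; push_cast; ring
  refine ⟨fun i => j i * 2 ^ e, fun i => (j i + 1) * 2 ^ e, fun x => forall_congr' fun i => ?_⟩
  have hlo : Q.c i - Q.d = ((j i * 2 ^ e : ℤ) : ℝ) * 2 ^ k := by
    rw [hc, hd, hpow]; push_cast; ring
  have hhi : Q.c i + Q.d = (((j i + 1) * 2 ^ e : ℤ) : ℝ) * 2 ^ k := by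
    rw [hc, hd, hpow]; push_cast; ring
  rw [hlo, hhi]
  exact Int.ceil_div_mem_Ioc_iff (by positivity) _ _

lemma mem_of_ceil_eq (hQ : Q.Dyadic) {k : ℤ} (hk : (2:ℝ) ^ k ≤ Q.side) (hx : x ∈ Q.toSet)
    (hxy : ∀ i, ⌈x i / 2 ^ k⌉ = ⌈y i / 2 ^ k⌉) : y ∈ Q.toSet := by
  obtain ⟨N, M, hNM⟩ := hQ.exists_mem_iff_ceil hk
  exact (hNM y).2 fun i => hxy i ▸ (hNM x).1 hx i

end Dyadic

end Cube

section CellWalk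

variable {n : ℕ}

/-- `⌈s / ℓ⌉ = p` says that `s` lies in the cell `((p - 1)ℓ, pℓ]`. -/
lemma exists_close_of_abs_sub_le_one {ℓ ε : ℝ} (hℓ : 0 < ℓ) (hε : 0 < ε) {p q : ℤ}
    (hpq : |p - q| ≤ 1) : ∃ s t : ℝ, ⌈s / ℓ⌉ = p ∧ ⌈t / ℓ⌉ = q ∧ |s - t| < ε := by
  wlog hle : p ≤ q generalizing p q
  · obtain ⟨s, t, hs, ht, hst⟩ := this (by rwa [abs_sub_comm]) (by omega)
    exact ⟨t, s, ht, hs, by rwa [abs_sub_comm]⟩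
  have hp : ⌈(p * ℓ) / ℓ⌉ = p := by simp [hℓ.ne']
  obtain rfl | rfl : p = q ∨ q = p + 1 := by rw [abs_le] at hpq; omega
  · exact ⟨p * ℓ, p * ℓ, hp, hp, by simpa using hε⟩
  set δ := min (ε / 2) ℓ
  have hδ : 0 < δ := lt_min (by positivity) hℓ
  refine ⟨p * ℓ, p * ℓ + δ, hp, ?_, ?_⟩
  · rw [Int.ceil_eq_iff, add_div, mul_div_cancel_right₀ _ hℓ.ne']
    push_cast
    constructor
    · linarith [div_pos hδ hℓ]
    · linarith [(div_le_one hℓ).2 (min_le_right (ε / 2) ℓ)]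
  · rw [sub_add_cancel_left, abs_neg, abs_of_pos hδ]
    exact (min_le_left _ _).trans_lt (half_lt_self hε)

/-- The point of the box of radius `t` around `a` nearest to `b`: as `t` grows it moves from `a`
to `b` by at most one in every coordinate per step. -/
def clampPath (a b : Fin n → ℤ) (t : ℕ) : Fin n → ℤ :=
  fun i => max (a i - t) (min (a i + t) (b i))

lemma exists_close_points {ℓ ε : ℝ} (hℓ : 0 < ℓ) (hε : 0 < ε) {v w : Fin n → ℤ}
    (h : ∀ i, |v i - w i| ≤ 1) :
    ∃ x y : Fin n → ℝ, (∀ i, ⌈x i / ℓ⌉ = v i) ∧ (∀ i, ⌈y i / ℓ⌉ = w i) ∧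
      ∀ i, |x i - y i| < ε := by
  choose x y hx hy hxy using fun i => exists_close_of_abs_sub_le_one hℓ hε (h i)
  exact ⟨x, y, hx, hy, hxy⟩

lemma exists_cell_walk {ℓ ε : ℝ} (hℓ : 0 < ℓ) (hε : 0 < ε) (a b : Fin n → ℝ) (T : ℕ)
    (hab : ∀ i, |b i - a i| ≤ T * ℓ) :
    ∃ y x : ℕ → Fin n → ℝ, y 0 = a ∧ (∀ i, ⌈y T i / ℓ⌉ = ⌈b i / ℓ⌉) ∧
      ∀ t, (∀ i, ⌈x t i / ℓ⌉ = ⌈y t i / ℓ⌉) ∧ ∀ i, |x t i - y (t + 1) i| < ε := by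
  set A : Fin n → ℤ := fun i => ⌈a i / ℓ⌉
  set B : Fin n → ℤ := fun i => ⌈b i / ℓ⌉
  have hAB : ∀ i, |B i - A i| ≤ T := fun i => Int.abs_ceil_sub_ceil_le <| by
    rw [← sub_div, abs_div, abs_of_pos hℓ, div_le_iff₀ hℓ]; exact_mod_cast hab i
  have hstep : ∀ t i, |clampPath A B t i - clampPath A B (t + 1) i| ≤ 1 := by
    intro t i; simp only [clampPath, abs_le]; push_cast; omega
  choose x y hx hy hxy using fun t => exists_close_points hℓ hε (hstep t)
  let z : ℕ → Fin n → ℝ := fun t => match t with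
    | 0 => a
    | t + 1 => y t
  have hz : ∀ t i, ⌈z t i / ℓ⌉ = clampPath A B t i := by
    rintro (_ | t) i
    · simp only [z, clampPath, A]; push_cast; omega
    · exact hy t i
  refine ⟨z, x, rfl, fun i => ?_, fun t => ⟨fun i => (hx t i).trans (hz t i).symm, hxy t⟩⟩
  rw [hz]
  show max (A i - T) (min (A i + T) (B i)) = B i
  have := abs_le.1 (hAB i)
  omega

end CellWalk

def splice {α : Type*} (J : ℕ) (f g : ℕ → α) : ℕ → α :=
  fun t => if t < J then f t else g (t - J)

lemma comp_splice {α β : Type*} (φ : α → β) (J : ℕ) (f g : ℕ → α) :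
    φ ∘ splice J f g = splice J (φ ∘ f) (φ ∘ g) := by
  funext t; simp only [Function.comp_apply, splice]; split_ifs <;> rfl

lemma splice_le_mul_pow {f g : ℕ → ℝ} {C K ρ s : ℝ} {J N L : ℕ} (hρ0 : 0 ≤ ρ) (hρ1 : ρ ≤ 1)
    (hρN : 1 / 2 ≤ ρ ^ N) (hJN : J ≤ N) (hs : 0 ≤ s) (hK : 0 ≤ K) (hKC : 2 * K ≤ C)
    (hf : ∀ t < J, s ≤ f t ∧ f t ≤ K * s) (hg0 : g 0 ≤ s / 2)
    (hg : ∀ l k, l ≤ k → k < L → g k ≤ C * ρ ^ (k - l) * g l) :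
    ∀ l k, l ≤ k → k < J + L → splice J f g k ≤ C * ρ ^ (k - l) * splice J f g l := by
  have hhalf : ∀ j ≤ N, 1 / 2 ≤ ρ ^ j := fun j hj => hρN.trans (pow_le_pow_of_le_one hρ0 hρ1 hj)
  have hC : 0 ≤ C := by linarith
  intro l k hlk hk
  unfold splice
  split_ifs with hkJ hlJ hlJ
  · have hfl : 0 ≤ f l := hs.trans (hf l hlJ).1
    calc f k ≤ K * s := (hf k hkJ).2
      _ ≤ K * f l := by gcongr; exact (hf l hlJ).1
      _ ≤ C * (1 / 2) * f l := by gcongr; linarith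
      _ ≤ C * ρ ^ (k - l) * f l := by gcongr; exact hhalf (k - l) (by omega)
  · omega
  · have hsplit : ρ ^ (k - J) * ρ ^ (J - l) = ρ ^ (k - l) := by rw [← pow_add]; congr 1; omega
    calc g (k - J) ≤ C * ρ ^ (k - J) * g 0 := by simpa using hg 0 (k - J) (by omega) (by omega)
      _ ≤ C * ρ ^ (k - J) * (1 / 2 * s) := by gcongr; linarith
      _ ≤ C * ρ ^ (k - J) * (ρ ^ (J - l) * s) := by gcongr; exact hhalf (J - l) (by omega)
      _ = C * ρ ^ (k - l) * s := by rw [← hsplit]; ring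
      _ ≤ C * ρ ^ (k - l) * f l := by gcongr; exact (hf l hlJ).1
  · simpa [show k - J - (l - J) = k - l by omega] using hg (l - J) (k - J) (by omega) (by omega)

lemma Finset.exists_pos_le_dist {X : Type*} [MetricSpace X] (s : Finset X) :
    ∃ m > 0, ∀ x ∈ s, ∀ y ∈ s, x ≠ y → m ≤ dist x y := by
  rcases s.offDiag.eq_empty_or_nonempty with h | h
  · refine ⟨1, one_pos, fun x hx y hy hxy => ?_⟩
    have : (x, y) ∈ s.offDiag := Finset.mem_offDiag.2 ⟨hx, hy, hxy⟩
    simp [h] at this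
  · obtain ⟨p, hp, hmin⟩ := s.offDiag.exists_min_image (fun p => dist p.1 p.2) h
    exact ⟨dist p.1 p.2, dist_pos.2 (Finset.mem_offDiag.1 hp).2.2,
      fun x hx y hy hxy => hmin (x, y) (Finset.mem_offDiag.2 ⟨hx, hy, hxy⟩)⟩

namespace CZSetting

variable {n : ℕ} (S : CZSetting n) {Q Q' : Cube n} {x y : Fin n → ℝ}

def cubeAt (x : Fin n → ℝ) : Cube n := (S.partition x).exists.choose

lemma cubeAt_mem (x : Fin n → ℝ) : S.cubeAt x ∈ S.CZ := (S.partition x).exists.choose_spec.1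

lemma mem_cubeAt (x : Fin n → ℝ) : x ∈ (S.cubeAt x).toSet :=
  (S.partition x).exists.choose_spec.2

lemma cubeAt_eq (hQ : Q ∈ S.CZ) (hx : x ∈ Q.toSet) : S.cubeAt x = Q :=
  (S.partition x).unique ⟨S.cubeAt_mem x, S.mem_cubeAt x⟩ ⟨hQ, hx⟩

lemma d_pos_s15 (hQ : Q ∈ S.CZ) : 0 < Q.d := (S.dyadic Q hQ).d_pos_s15

/-- `9Q` contains two distinct points of `E`. -/
lemma exists_pos_le_d : ∃ m > 0, ∀ Q ∈ S.CZ, m ≤ Q.d := by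
  obtain ⟨m, hm, hsep⟩ := S.E.exists_pos_le_dist
  refine ⟨m / 18, by positivity, fun Q hQ => ?_⟩
  have hdense := S.dense Q hQ
  obtain ⟨x, hx, y, hy, hxy⟩ :=
    (Set.one_lt_ncard (s := (S.E : Set (Fin n → ℝ)) ∩ (Q.scale 9).toSet)
      (Set.finite_of_ncard_pos (by omega))).1 (by omega)
  have hdist : dist x y ≤ 18 * Q.d := (dist_pi_le_iff (by linarith [S.d_pos_s15 hQ])).2 fun i => by
    have hx9 := Cube.abs_sub_c_le hx.2 i
    have hy9 := Cube.abs_sub_c_le hy.2 i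
    simp only [Cube.scale] at hx9 hy9
    rw [Real.dist_eq]
    calc |x i - y i| ≤ |x i - Q.c i| + |Q.c i - y i| := abs_sub_le _ _ _
      _ ≤ 18 * Q.d := by rw [abs_sub_comm (Q.c i)]; linarith
  linarith [hsep x hx.1 y hy.1 hxy]

lemma linked_cubeAt_of_close {m : ℝ} (hmin : ∀ Q ∈ S.CZ, m ≤ Q.d)
    (hxy : ∀ i, |x i - y i| < cG * m) : Linked (S.cubeAt x) (S.cubeAt y) :=
  Cube.linked_of_close (S.d_pos_s15 (S.cubeAt_mem x)).le (S.mem_cubeAt x) (S.mem_cubeAt y) fun i =>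
    (hxy i).trans_le (mul_le_mul_of_nonneg_left (hmin _ (S.cubeAt_mem y)) cG_pos.le)

lemma side_le_of_linked (hQ : Q ∈ S.CZ) (hQ' : Q' ∈ S.CZ) (h : Linked Q Q') :
    Q'.side ≤ 64 * Q.side := by
  have hcG : 1 + cG ≤ 1 + 10 * cG := by linarith [cG_pos]
  refine (S.goodGeom Q hQ Q' hQ' (h.mono (Set.inter_subset_inter ?_ ?_))).2 <;>
    exact Cube.toSet_scale_subset_s15 (S.d_pos_s15 ‹_›).le hcG

lemma side_le_pow_of_linked {r : ℕ → Cube n} {J : ℕ} (hr : ∀ t ≤ J, r t ∈ S.CZ)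
    (hlink : ∀ t < J, Linked (r t) (r (t + 1))) : ∀ t ≤ J, (r t).side ≤ 64 ^ t * (r 0).side := by
  intro t ht
  induction t with
  | zero => simp
  | succ t ih =>
    calc (r (t + 1)).side ≤ 64 * (r t).side :=
          S.side_le_of_linked (hr t (by omega)) (hr (t + 1) ht) (hlink t ht)
      _ ≤ 64 ^ (t + 1) * (r 0).side := by rw [pow_succ']; linarith [ih (by omega)]

theorem exists_descent {m : ℝ} (hm : 0 < m) (hmin : ∀ Q ∈ S.CZ, m ≤ Q.d) {B : Cube n}
    (hB : B ∈ S.CZ) (hnk : ¬ Keystone S.CZ B) :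
    ∃ J, 0 < J ∧ J ≤ 50 ∧ ∃ r : ℕ → Cube n, r 0 = B ∧ (∀ t ≤ J, r t ∈ S.CZ) ∧
      (∀ t < J, Linked (r t) (r (t + 1))) ∧ (∀ t < J, B.side ≤ (r t).side) ∧
      (r J).side ≤ B.side / 2 := by
  obtain ⟨Q', hQ', ⟨z, hzQ', hz⟩, hQ'B⟩ :
      ∃ Q' ∈ S.CZ, (Q'.toSet ∩ (B.scale 100).toSet).Nonempty ∧ Q'.side < B.side := by
    simpa [Keystone, hB] using hnk
  obtain ⟨k, hk⟩ := (S.dyadic B hB).side_eq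
  obtain ⟨y, x, hy0, hy50, hxy⟩ := exists_cell_walk (by positivity : (0:ℝ) < 2 ^ k)
    (mul_pos cG_pos hm) B.c z 50 fun i => by
      have := Cube.abs_sub_c_le hz i
      simp only [Cube.scale] at this
      rw [← hk, Cube.side]; push_cast; linarith
  set r : ℕ → Cube n := fun t => S.cubeAt (y t)
  have hrCZ : ∀ t, r t ∈ S.CZ := fun t => S.cubeAt_mem (y t)
  have hmem : ∀ t, B.side ≤ (r t).side → ∀ w, (∀ i, ⌈y t i / 2 ^ k⌉ = ⌈w i / 2 ^ k⌉) →
      w ∈ (r t).toSet := fun t ht w hw =>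
    (S.dyadic _ (hrCZ t)).mem_of_ceil_eq (hk ▸ ht) (S.mem_cubeAt (y t)) hw
  have hlink : ∀ t, B.side ≤ (r t).side → Linked (r t) (r (t + 1)) := fun t ht => by
    rw [← S.cubeAt_eq (hrCZ t) (hmem t ht (x t) fun i => ((hxy t).1 i).symm)]
    exact S.linked_cubeAt_of_close hmin (hxy t).2
  have h50 : (r 50).side < B.side := by
    by_contra! h
    rw [← S.cubeAt_eq (hrCZ 50) (hmem 50 h z hy50), S.cubeAt_eq hQ' hzQ'] at h
    linarith
  have hr0 : r 0 = B := by
    show S.cubeAt (y 0) = B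
    rw [hy0]; exact S.cubeAt_eq hB (Cube.c_mem_toSet (S.d_pos_s15 hB))
  have hsmall : ∃ t, (r t).side < B.side := ⟨50, h50⟩
  set J := Nat.find hsmall
  have hbig : ∀ t < J, B.side ≤ (r t).side := fun t ht => not_lt.1 (Nat.find_min hsmall ht)
  have hJ0 : 0 < J := (Nat.find_pos hsmall).2 (by rw [hr0]; exact lt_irrefl _)
  exact ⟨J, hJ0, Nat.find_le h50, r, hr0, fun t _ => hrCZ t, fun t ht => hlink t (hbig t ht), hbig,
    (S.dyadic B hB).side_le_half_of_lt (S.dyadic _ (hrCZ _)) (Nat.find_spec hsmall)⟩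

def IsKeystoneChain (C ρ : ℝ) (L : ℕ) (seq : ℕ → Cube n) : Prop :=
  1 ≤ L ∧ (∀ l < L, seq l ∈ S.CZ) ∧ Keystone S.CZ (seq (L - 1)) ∧
    (∀ l, l + 1 < L → Linked (seq l) (seq (l + 1))) ∧
    ∀ l k, l ≤ k → k < L → (seq k).side ≤ C * ρ ^ (k - l) * (seq l).side

variable {S}

lemma isKeystoneChain_const {C ρ : ℝ} (hC : 1 ≤ C) {B : Cube n} (hB : Keystone S.CZ B) :
    S.IsKeystoneChain C ρ 1 fun _ => B := by
  have hside : 0 ≤ B.side := by unfold Cube.side; linarith [S.d_pos_s15 hB.1]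
  refine ⟨le_rfl, fun _ _ => hB.1, hB, fun l hl => by omega, fun l k hlk hk => ?_⟩
  rw [show k - l = 0 by omega, pow_zero, mul_one]
  nlinarith

lemma IsKeystoneChain.splice_descent {ρ : ℝ} (hρ0 : 0 ≤ ρ) (hρ1 : ρ ≤ 1) (hρ : 1 / 2 ≤ ρ ^ 50)
    {J : ℕ} (hJ0 : 0 < J) (hJ : J ≤ 50) {r : ℕ → Cube n} (hr : ∀ t ≤ J, r t ∈ S.CZ)
    (hlink : ∀ t < J, Linked (r t) (r (t + 1))) (hbig : ∀ t < J, (r 0).side ≤ (r t).side)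
    (hhalf : (r J).side ≤ (r 0).side / 2) {L : ℕ} {seq : ℕ → Cube n} (hseq0 : seq 0 = r J)
    (hseq : S.IsKeystoneChain (2 * 64 ^ 50) ρ L seq) :
    S.IsKeystoneChain (2 * 64 ^ 50) ρ (J + L) (splice J r seq) := by
  obtain ⟨hL, hmem, hkey, hlinks, hdecay⟩ := hseq
  refine ⟨by omega, fun l hl => ?_, ?_, fun l hl => ?_, fun l k hlk hk => ?_⟩
  · unfold splice; split_ifs
    · exact hr l (by omega)
    · exact hmem _ (by omega)
  · simp only [splice, if_neg (show ¬J + L - 1 < J by omega)]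
    rwa [show J + L - 1 - J = L - 1 by omega]
  · unfold splice; split_ifs with h₁ h₂ h₂
    · exact hlink l h₁
    · rw [show l + 1 - J = 0 by omega, hseq0, ← show l + 1 = J by omega]
      exact hlink l h₁
    · omega
    · rw [show l + 1 - J = l - J + 1 by omega]
      exact hlinks _ (by omega)
  · have hside : ∀ t, (splice J r seq t).side = splice J (Cube.side ∘ r) (Cube.side ∘ seq) t :=
      congrFun (comp_splice Cube.side J r seq)
    have hr0 : 0 ≤ (r 0).side := by unfold Cube.side; linarith [S.d_pos_s15 (hr 0 (Nat.zero_le _))]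
    have hbounded : ∀ t < J, (r t).side ≤ 64 ^ 50 * (r 0).side := fun t ht =>
      (S.side_le_pow_of_linked hr hlink t ht.le).trans <| by
        gcongr
        exacts [by norm_num, by omega]
    rw [hside, hside]
    exact splice_le_mul_pow hρ0 hρ1 hρ hJ hr0 (by norm_num) le_rfl
      (fun t ht => ⟨hbig t ht, hbounded t ht⟩) (by simpa [hseq0] using hhalf) hdecay l k hlk hk

theorem exists_isKeystoneChain {ρ : ℝ} (hρ0 : 0 ≤ ρ) (hρ1 : ρ ≤ 1) (hρ : 1 / 2 ≤ ρ ^ 50)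
    {Q : Cube n} (hQ : Q ∈ S.CZ) :
    ∃ L seq, seq 0 = Q ∧ S.IsKeystoneChain (2 * 64 ^ 50) ρ L seq := by
  obtain ⟨m, hm, hmin⟩ := S.exists_pos_le_d
  obtain ⟨F, hF⟩ := pow_unbounded_of_one_lt (Q.d / m) one_lt_two
  induction F generalizing Q with
  | zero =>
    rw [pow_zero, div_lt_one hm] at hF
    linarith [hmin Q hQ]
  | succ F ih =>
    by_cases hk : Keystone S.CZ Q
    · exact ⟨1, fun _ => Q, rfl, isKeystoneChain_const (by norm_num) hk⟩
    obtain ⟨J, hJ0, hJ, r, rfl, hr, hlink, hbig, hhalf⟩ := S.exists_descent hm hmin hQ hk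
    obtain ⟨L, seq, hseq0, hseq⟩ := ih (hr J le_rfl) <| by
      unfold Cube.side at hhalf
      rw [pow_succ, div_lt_iff₀ hm] at hF
      rw [div_lt_iff₀ hm]
      linarith
    refine ⟨J + L, splice J r seq, if_pos hJ0, ?_⟩
    exact hseq.splice_descent hρ0 hρ1 hρ hJ0 hJ hr hlink hbig hhalf hseq0

end CZSetting

theorem statement15_general (n : ℕ) :
    ∃ C c : ℝ, 0 < C ∧ 0 < c ∧ c < 1 ∧
      ∀ S : CZSetting n, ∀ Q ∈ S.CZ,
        ∃ (L : ℕ) (seq : ℕ → Cube n),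
          1 ≤ L ∧
          (∀ l < L, seq l ∈ S.CZ) ∧
          seq 0 = Q ∧
          Keystone S.CZ (seq (L - 1)) ∧
          (∀ l, l + 1 < L →
            (((seq l).scale (1 + cG)).toSet ∩
              ((seq (l + 1)).scale (1 + cG)).toSet).Nonempty) ∧
          (∀ l k, l ≤ k → k < L →
            (seq k).side ≤ C * (1 - c) ^ (k - l) * (seq l).side) := by
  refine ⟨2 * 64 ^ 50, 1 / 100, by norm_num, by norm_num, by norm_num, fun S Q hQ => ?_⟩
  obtain ⟨L, seq, hseq0, hL, hmem, hkey, hlink, hdecay⟩ :=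
    S.exists_isKeystoneChain (ρ := 1 - 1 / 100) (by norm_num) (by norm_num) (by norm_num) hQ
  exact ⟨L, seq, hL, hmem, hseq0, hkey, hlink, hdecay⟩

/-- **Lemma 5.14 (Lemma 10): from every CZ cube there is a connected geometrically
decaying path of CZ cubes ending at a keystone cube.** -/
theorem statement15 (n : ℕ) (hn : 1 ≤ n) :
    ∃ C c : ℝ, 0 < C ∧ 0 < c ∧ c < 1 ∧
      ∀ S : CZSetting n, ∀ Q ∈ S.CZ,
        ∃ (L : ℕ) (seq : ℕ → Cube n),
          1 ≤ L ∧
          (∀ l < L, seq l ∈ S.CZ) ∧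
          seq 0 = Q ∧
          Keystone S.CZ (seq (L - 1)) ∧
          (∀ l, l + 1 < L →
            (((seq l).scale (1 + cG)).toSet ∩
              ((seq (l + 1)).scale (1 + cG)).toSet).Nonempty) ∧
          (∀ l k, l ≤ k → k < L →
            (seq k).side ≤ C * (1 - c) ^ (k - l) * (seq l).side) :=
  statement15_general n
end
end

section
/- Let n ≥ 1 and let CZ∘ be a finite partition of Q∘ = (0,1]ⁿ into dyadic cubes, and let CZ∘_key = {Q♯₁,…,Q♯_{μmax}} denote its keystone cubes. Then there is a constant C' depending only on n such that for each μ ∈ {1,…,μmax}, there are at most C' indices μ' ∈ {1,…,μmax} with 10Q♯_{μ'} ∩ 10Q♯_μ ≠ ∅. -/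
noncomputable section

/-- The unit cube `Q∘ = (0,1]ⁿ`, as a `Cube`. -/
def Qo (n : ℕ) : Cube n := ⟨fun _ => 1 / 2, 1 / 2⟩

/-- A finite partition of `Q∘ = (0,1]ⁿ` into dyadic cubes. -/
structure CZo (n : ℕ) where
  cubes : Finset (Cube n)
  dyadic : ∀ Q ∈ cubes, Q.Dyadic
  sub : ∀ Q ∈ cubes, Q.toSet ⊆ (Qo n).toSet
  partition : ∀ x ∈ (Qo n).toSet, ∃! Q, Q ∈ cubes ∧ x ∈ Q.toSet

/-- Two cubes are neighbors, `Q ↔ Q'`, if their closures intersect. -/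
def Nbr {n : ℕ} (Q Q' : Cube n) : Prop :=
  (closure Q.toSet ∩ closure Q'.toSet).Nonempty

/-- Extensionality for cubes. -/
lemma Cube.ext' {n : ℕ} {Q₁ Q₂ : Cube n} (hc : Q₁.c = Q₂.c) (hd : Q₁.d = Q₂.d) :
    Q₁ = Q₂ := by
  cases Q₁; cases Q₂; simp_all

/-- If `Q` is keystone, `Q' ∈ CZ` is no bigger, and `10Q'` meets `10Q`,
then `Q` is no bigger than `Q'`. -/
lemma key_le {n : ℕ} (CZ : Set (Cube n)) (Q Q' : Cube n)
    (hQ : Keystone CZ Q) (hQ' : Q' ∈ CZ)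
    (hd : 0 < Q.d) (hd' : 0 < Q'.d) (hle : Q'.d ≤ Q.d)
    (hmeet : ((Q'.scale 10).toSet ∩ (Q.scale 10).toSet).Nonempty) :
    Q.d ≤ Q'.d := by
  obtain ⟨y, hy', hy⟩ := hmeet
  have h : Q.side ≤ Q'.side := by
    apply hQ.2 Q' hQ'
    refine ⟨Q'.c, fun i => ⟨by linarith, by linarith⟩, fun i => ?_⟩
    have h1 := hy' i
    have h2 := hy i
    simp only [Cube.scale] at h1 h2 ⊢
    constructor <;> nlinarith [h1.1, h1.2, h2.1, h2.2]
  simp only [Cube.side] at h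
  linarith

/-- **Lemma 6.1: each keystone cube has boundedly many keystone cubes `Q'` with
`10Q' ∩ 10Q ≠ ∅`.** -/
theorem statement17 (n : ℕ) (hn : 1 ≤ n) :
    ∃ C : ℝ, 0 < C ∧
      ∀ P : CZo n, ∀ Q ∈ P.cubes, Keystone (↑P.cubes : Set (Cube n)) Q →
        ({Q' : Cube n | Q' ∈ P.cubes ∧ Keystone (↑P.cubes : Set (Cube n)) Q' ∧
          ((Q'.scale 10).toSet ∩ (Q.scale 10).toSet).Nonempty}.ncard : ℝ) ≤ C := by
  refine ⟨(21 : ℝ) ^ n, by positivity, ?_⟩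
  intro P Q hQ hkey
  obtain ⟨k, j, hdk, hck⟩ := P.dyadic Q hQ
  have h2k : (0 : ℝ) < 2 ^ k := by positivity
  have hd : 0 < Q.d := by rw [hdk]; positivity
  set S : Set (Cube n) := {Q' : Cube n | Q' ∈ P.cubes ∧
      Keystone (↑P.cubes : Set (Cube n)) Q' ∧
      ((Q'.scale 10).toSet ∩ (Q.scale 10).toSet).Nonempty} with hS
  set T : Finset (Fin n → ℤ) :=
      Fintype.piFinset fun i => Finset.Icc (j i - 10) (j i + 10) with hT
  have claim : ∀ Q' ∈ S, Q'.d = Q.d ∧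
      (∀ i, Q'.c i = ((⌊Q'.c i / 2 ^ k⌋ : ℝ) + 1 / 2) * 2 ^ k) ∧
      (fun i => ⌊Q'.c i / 2 ^ k⌋) ∈ T := by
    rintro Q' ⟨hm, hkey', hmeet⟩
    obtain ⟨k', j', hdk', hck'⟩ := P.dyadic Q' hm
    have hd' : 0 < Q'.d := by rw [hdk']; positivity
    have deq : Q'.d = Q.d := by
      have hmeet2 : ((Q.scale 10).toSet ∩ (Q'.scale 10).toSet).Nonempty := by
        rwa [Set.inter_comm]
      rcases le_total Q'.d Q.d with h | h
      · exact le_antisymm h (key_le _ Q Q' hkey hm hd hd' h hmeet)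
      · exact le_antisymm (key_le _ Q' Q hkey' hQ hd' hd h hmeet2) h
    have hpow : (2 : ℝ) ^ k' = 2 ^ k := by
      rw [hdk, hdk'] at deq; linarith
    have hc' : ∀ i, Q'.c i = ((j' i : ℝ) + 1 / 2) * 2 ^ k := by
      intro i; rw [hck' i, hpow]
    have hfloor : ∀ i, ⌊Q'.c i / 2 ^ k⌋ = j' i := by
      intro i
      have : Q'.c i / 2 ^ k = (j' i : ℝ) + 1 / 2 := by
        rw [hc' i]; field_simp
      rw [this, Int.floor_eq_iff]
      constructor <;> push_cast <;> linarith
    refine ⟨deq, fun i => by rw [hfloor i]; exact hc' i, ?_⟩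
    rw [Fintype.mem_piFinset]
    intro i
    rw [hfloor i, Finset.mem_Icc]
    obtain ⟨y, hy', hy⟩ := hmeet
    have h1 := hy' i
    have h2 := hy i
    simp only [Cube.scale, Cube.toSet, Set.mem_setOf_eq] at h1 h2
    have hci := hck i
    have hci' := hc' i
    have hdiff : |(j' i : ℝ) - j i| < 10 := by
      rw [abs_lt]
      have hb : |Q'.c i - Q.c i| < 20 * Q.d := by
        rw [abs_lt]
        constructor <;> nlinarith [h1.1, h1.2, h2.1, h2.2, deq]
      rw [hci, hci', abs_lt] at hb
      rw [hdk] at hb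
      constructor <;> nlinarith [hb.1, hb.2]
    rw [abs_lt] at hdiff
    constructor
    · exact_mod_cast (by push_cast; linarith [hdiff.1] : ((j i - 10 : ℤ) : ℝ) ≤ (j' i : ℤ))
    · exact_mod_cast (by push_cast; linarith [hdiff.2] : ((j' i : ℤ) : ℝ) ≤ ((j i + 10 : ℤ) : ℝ))
  have hle : S.ncard ≤ (↑T : Set (Fin n → ℤ)).ncard := by
    apply Set.ncard_le_ncard_of_injOn (fun Q' => fun i => ⌊Q'.c i / 2 ^ k⌋)
    · intro Q' hQ'
      exact (claim Q' hQ').2.2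
    · intro Q₁ h₁ Q₂ h₂ hfe
      obtain ⟨hd₁, hc₁, -⟩ := claim Q₁ h₁
      obtain ⟨hd₂, hc₂, -⟩ := claim Q₂ h₂
      refine Cube.ext' (funext fun i => ?_) (hd₁.trans hd₂.symm)
      rw [hc₁ i, hc₂ i]
      have : ⌊Q₁.c i / 2 ^ k⌋ = ⌊Q₂.c i / 2 ^ k⌋ := congrFun hfe i
      rw [this]
  have hTcard : (↑T : Set (Fin n → ℤ)).ncard = 21 ^ n := by
    rw [Set.ncard_coe_finset, hT, Fintype.card_piFinset]
    have hc : ∀ i : Fin n, (Finset.Icc (j i - 10) (j i + 10)).card = 21 := by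
      intro i; rw [Int.card_Icc]; omega
    simp [hc, Finset.prod_const]
  calc (S.ncard : ℝ) ≤ ((21 ^ n : ℕ) : ℝ) := by
        rw [← hTcard]; exact_mod_cast hle
    _ = (21 : ℝ) ^ n := by push_cast; ring
end
end
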